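/- arXiv:2109.04005 — 8 statements merged into one kernel-verified Lean document; each statement's English description precedes it below -/
import Mathlib

section
/- Let q ≥ 1 and m ≥ 1. Let U and V be open subsets of ℝ^q, let P_U be a differential operator of order ≤ m on U with coefficients a_s : U → ℂ (a_s smooth), and let P_V be a differential operator of order ≤ m on V with coefficients b_s : V → ℂ (b_s smooth). Let ψ : U → V be a smooth map that intertwines P_U and P_V, i.e. (P_V f)(ψ(x)) = (P_U (f ∘ ψ))(x) for every smooth f : V → ℂ and every x ∈ U. Then the zero-order coefficients satisfy b_0(ψ(x)) = a_0(x) for every x ∈ U (where 0 is the zero multi-index), and consequently the parts of order ≥ 1 also intertwine: for every smooth f : V → ℂ and x ∈ U, Σ_{1 ≤ |s| ≤ m} b_s(ψ(x)) (∂^s f)(ψ(x)) = Σ_{1 ≤ |s| ≤ m} a_s(x) (∂^s (f ∘ ψ))(x). -/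
open Finset

/-- `E q` is Euclidean space `ℝ^q`. -/
abbrev E (q : ℕ) := EuclideanSpace ℝ (Fin q)

/-- Partial derivative in the `i`-th coordinate direction. -/
noncomputable def pd {q : ℕ} (i : Fin q) (f : E q → ℂ) : E q → ℂ :=
  fun x => fderiv ℝ f x (EuclideanSpace.single i 1)

/-- Iterated partial derivative `∂^s f = ∂^{s₁}_{y₁} ⋯ ∂^{s_q}_{y_q} f`
associated to a multi-index `s : Fin q → ℕ`. -/
noncomputable def mpd {q : ℕ} (s : Fin q → ℕ) (f : E q → ℂ) : E q → ℂ :=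
  (List.finRange q).foldr (fun i g => (pd i)^[s i] g) f

/-- The differential operator of order `≤ m` with coefficients `c`:
`(P f)(x) = Σ_{|s| ≤ m} c_s(x) · (∂^s f)(x)`. -/
noncomputable def diffOp {q : ℕ} (m : ℕ) (c : (Fin q → ℕ) → E q → ℂ)
    (f : E q → ℂ) (x : E q) : ℂ :=
  ∑ s ∈ (Finset.Iic (fun _ : Fin q => m)).filter (fun s => ∑ i, s i ≤ m),
    c s x * mpd s f x


lemma pd_const {q : ℕ} (i : Fin q) (c : ℂ) : pd i (fun _ => c) = fun _ => 0 := by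
  funext x; simp [pd]

lemma pd_iter_const {q : ℕ} (i : Fin q) (n : ℕ) (c : ℂ) :
    (pd i)^[n] (fun _ => c) = fun _ => if n = 0 then c else 0 := by
  induction n generalizing c with
  | zero => simp
  | succ k ih =>
      rw [Function.iterate_succ_apply, pd_const, ih 0]
      simp

lemma foldr_mpd_const {q : ℕ} (s : Fin q → ℕ) (c : ℂ) (l : List (Fin q)) :
    l.foldr (fun i g => (pd i)^[s i] g) (fun _ => c) =
      fun _ => if ∀ i ∈ l, s i = 0 then c else 0 := by
  induction l with
  | nil => simp
  | cons i l ih =>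
      simp only [List.foldr_cons, ih, pd_iter_const]
      by_cases h : s i = 0 <;> by_cases h' : ∀ j ∈ l, s j = 0 <;>
        simp [h, h']

lemma mpd_const {q : ℕ} (s : Fin q → ℕ) (c : ℂ) :
    mpd s (fun _ => c) = fun _ => if s = (fun _ => 0) then c else 0 := by
  rw [mpd, foldr_mpd_const]
  congr 1
  have : (∀ i ∈ List.finRange q, s i = 0) ↔ s = (fun _ => 0) := by
    constructor
    · intro h; funext i; exact h i (List.mem_finRange i)
    · intro h i _; rw [h]
  simp only [this]

lemma mpd_zero {q : ℕ} (f : E q → ℂ) : mpd (fun _ => 0) f = f := by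
  rw [mpd]
  induction (List.finRange q) with
  | nil => rfl
  | cons i l ih => simpa using ih

theorem zero_order_coeff_and_higher_order_intertwine
    {q m : ℕ} (hq : 1 ≤ q) (hm : 1 ≤ m)
    (U V : Set (E q)) (hU : IsOpen U) (hV : IsOpen V)
    (a b : (Fin q → ℕ) → E q → ℂ)
    (ha : ∀ s : Fin q → ℕ, ∑ i, s i ≤ m → ContDiffOn ℝ (⊤ : ℕ∞) (a s) U)
    (hb : ∀ s : Fin q → ℕ, ∑ i, s i ≤ m → ContDiffOn ℝ (⊤ : ℕ∞) (b s) V)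
    (ψ : E q → E q) (hψ : ContDiffOn ℝ (⊤ : ℕ∞) ψ U) (hmaps : Set.MapsTo ψ U V)
    (hcomm : ∀ f : E q → ℂ, ContDiffOn ℝ (⊤ : ℕ∞) f V →
      ∀ x ∈ U, diffOp m b f (ψ x) = diffOp m a (f ∘ ψ) x) :
    (∀ x ∈ U, b (fun _ => 0) (ψ x) = a (fun _ => 0) x) ∧
    (∀ f : E q → ℂ, ContDiffOn ℝ (⊤ : ℕ∞) f V → ∀ x ∈ U,
      ∑ s ∈ (Finset.Iic (fun _ : Fin q => m)).filter
          (fun s => 1 ≤ ∑ i, s i ∧ ∑ i, s i ≤ m),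
        b s (ψ x) * mpd s f (ψ x)
      = ∑ s ∈ (Finset.Iic (fun _ : Fin q => m)).filter
          (fun s => 1 ≤ ∑ i, s i ∧ ∑ i, s i ≤ m),
        a s x * mpd s (f ∘ ψ) x) := by
  classical
  set z : Fin q → ℕ := fun _ => 0 with hz
  set Sfull := (Finset.Iic (fun _ : Fin q => m)).filter (fun s => ∑ i, s i ≤ m) with hSfull
  set S' := (Finset.Iic (fun _ : Fin q => m)).filter
      (fun s => 1 ≤ ∑ i, s i ∧ ∑ i, s i ≤ m) with hS'
  have hzIic : z ∈ Finset.Iic (fun _ : Fin q => m) := by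
    rw [Finset.mem_Iic]; intro i; simp [hz]
  have hzS : z ∈ Sfull := by
    rw [hSfull, Finset.mem_filter]
    exact ⟨hzIic, by simp [hz]⟩
  have hznS' : z ∉ S' := by
    rw [hS', Finset.mem_filter]
    push_neg
    intro _
    simp [hz]
  have hsplit : Sfull = insert z S' := by
    ext s
    simp only [hSfull, hS', Finset.mem_insert, Finset.mem_filter]
    constructor
    · rintro ⟨h1, h2⟩
      rcases Nat.eq_zero_or_pos (∑ i, s i) with h0 | hpos
      · left
        funext i
        exact Finset.sum_eq_zero_iff.mp h0 i (Finset.mem_univ i)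
      · right; exact ⟨h1, hpos, h2⟩
    · rintro (rfl | ⟨h1, h2, h3⟩)
      · exact ⟨hzIic, by simp [hz]⟩
      · exact ⟨h1, h3⟩
  -- evaluate the operator on the constant function 1
  have hone : ∀ (c : (Fin q → ℕ) → E q → ℂ) (y : E q),
      diffOp m c (fun _ => (1 : ℂ)) y = c z y := by
    intro c y
    rw [diffOp]
    rw [Finset.sum_eq_single z]
    · rw [mpd_const]; simp [hz]
    · intro s hs hne
      rw [mpd_const]
      simp [hz] at hne ⊢
      intro h
      exact absurd h hne
    · intro h
      exact absurd hzS h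
  have part1 : ∀ x ∈ U, b z (ψ x) = a z x := by
    intro x hx
    have h1 := hcomm (fun _ => (1 : ℂ)) contDiffOn_const x hx
    have : ((fun _ => (1 : ℂ)) ∘ ψ) = fun _ => (1 : ℂ) := rfl
    rw [this, hone, hone] at h1
    exact h1
  refine ⟨part1, ?_⟩
  intro f hf x hx
  have h1 := hcomm f hf x hx
  rw [diffOp, diffOp, ← hSfull, hsplit, Finset.sum_insert hznS',
    Finset.sum_insert hznS'] at h1
  rw [mpd_zero, mpd_zero] at h1
  have hfz : (f ∘ ψ) x = f (ψ x) := rfl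
  rw [hfz, part1 x hx] at h1
  exact add_left_cancel h1
end

section
/- Let q ≥ 1 and m ≥ 1. Let U and V be open subsets of ℝ^q, let P_U be a differential operator of order ≤ m on U with smooth coefficients a_s : U → ℂ, and let P_V be a differential operator of order ≤ m on V with smooth coefficients b_s : V → ℂ. Let ψ : U → V be a smooth map that intertwines P_U and P_V, i.e. (P_V f)(ψ(x)) = (P_U (f ∘ ψ))(x) for every smooth f : V → ℂ and every x ∈ U. Then the principal symbols are intertwined by the transpose of the differential of ψ: for every x ∈ U and every ξ ∈ ℝ^q, Σ_{|s| = m} a_s(x) η₁^{s₁} ⋯ η_q^{s_q} = Σ_{|s| = m} b_s(ψ(x)) ξ₁^{s₁} ⋯ ξ_q^{s_q}, where η ∈ ℝ^q is defined by ηᵢ = Σⱼ ξⱼ · ∂ψⱼ/∂yᵢ(x) (i.e. η = (Dψ_x)ᵀ ξ, the pullback of the covector ξ under ψ at x). -/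
open Finset

/-- The principal symbol `σ(P)_x(ξ) = Σ_{|s| = m} c_s(x) ξ₁^{s₁} ⋯ ξ_q^{s_q}`. -/
noncomputable def principalSymbol {q : ℕ} (m : ℕ) (c : (Fin q → ℕ) → E q → ℂ)
    (x : E q) (ξ : Fin q → ℝ) : ℂ :=
  ∑ s ∈ (Finset.Iic (fun _ : Fin q => m)).filter (fun s => ∑ i, s i = m),
    c s x * ∏ i, (ξ i : ℂ) ^ s i

/-! ### Auxiliary machinery -/

section Aux

variable {q : ℕ}

/-- Iterated partial derivative along a list of directions. -/
noncomputable def pdL (L : List (Fin q)) (f : E q → ℂ) : E q → ℂ := L.foldr pd f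

lemma pdL_nil (f : E q → ℂ) : pdL [] f = f := rfl

lemma pdL_cons (i : Fin q) (L : List (Fin q)) (f : E q → ℂ) :
    pdL (i :: L) f = pd i (pdL L f) := rfl

lemma pdL_append (L₁ L₂ : List (Fin q)) (f : E q → ℂ) :
    pdL (L₁ ++ L₂) f = pdL L₁ (pdL L₂ f) := by
  simp [pdL, List.foldr_append]

lemma pdL_replicate (k : ℕ) (i : Fin q) (f : E q → ℂ) :
    pdL (List.replicate k i) f = (pd i)^[k] f := by
  induction k with
  | zero => rfl
  | succ n ih =>
    rw [List.replicate_succ, pdL_cons, ih, Function.iterate_succ_apply']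

lemma foldr_eq_pdL (s : Fin q → ℕ) (f : E q → ℂ) :
    ∀ l : List (Fin q),
      l.foldr (fun i g => (pd i)^[s i] g) f
        = pdL (l.flatMap fun i => List.replicate (s i) i) f := by
  intro l
  induction l with
  | nil => rfl
  | cons i l ih =>
    simp only [List.foldr_cons, List.flatMap_cons, pdL_append, pdL_replicate, ih]

lemma mpd_eq_pdL (s : Fin q → ℕ) (f : E q → ℂ) :
    mpd s f = pdL ((List.finRange q).flatMap fun i => List.replicate (s i) i) f :=
  foldr_eq_pdL s f _

lemma diffAt_of_contDiffOn {U : Set (E q)} (hU : IsOpen U) {g : E q → ℂ}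
    (hg : ContDiffOn ℝ (⊤ : ℕ∞) g U) {y : E q} (hy : y ∈ U) : DifferentiableAt ℝ g y :=
  (hg.contDiffAt (hU.mem_nhds hy)).differentiableAt (by simp)

lemma contDiffOn_pd {U : Set (E q)} (hU : IsOpen U) {g : E q → ℂ}
    (hg : ContDiffOn ℝ (⊤ : ℕ∞) g U) (i : Fin q) : ContDiffOn ℝ (⊤ : ℕ∞) (pd i g) U := by
  have h1 : ContDiffOn ℝ (⊤ : ℕ∞) (fderiv ℝ g) U := hg.fderiv_of_isOpen hU (by simp)
  exact h1.clm_apply contDiffOn_const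

lemma pd_congr {i : Fin q} {u v : E q → ℂ} {y : E q} (h : u =ᶠ[nhds y] v) :
    pd i u y = pd i v y := by
  unfold pd; rw [h.fderiv_eq]

lemma pd_add {i : Fin q} {u v : E q → ℂ} {y : E q}
    (hu : DifferentiableAt ℝ u y) (hv : DifferentiableAt ℝ v y) :
    pd i (fun z => u z + v z) y = pd i u y + pd i v y := by
  unfold pd; rw [fderiv_fun_add hu hv]; simp

lemma pd_mul {i : Fin q} {u v : E q → ℂ} {y : E q}
    (hu : DifferentiableAt ℝ u y) (hv : DifferentiableAt ℝ v y) :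
    pd i (fun z => u z * v z) y = pd i u y * v y + u y * pd i v y := by
  unfold pd
  rw [fderiv_fun_mul hu hv]
  simp only [ContinuousLinearMap.add_apply, ContinuousLinearMap.smul_apply, smul_eq_mul]
  ring

lemma pd_const_mul {i : Fin q} {u : E q → ℂ} {y : E q} (c : ℂ)
    (hu : DifferentiableAt ℝ u y) :
    pd i (fun z => c * u z) y = c * pd i u y := by
  unfold pd
  rw [fderiv_const_mul hu]
  simp

lemma pd_pow {i : Fin q} {u : E q → ℂ} {y : E q}
    (hu : DifferentiableAt ℝ u y) (n : ℕ) :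
    pd i (fun z => u z ^ (n + 1)) y = ((n + 1 : ℕ) : ℂ) * u y ^ n * pd i u y := by
  induction n with
  | zero =>
    have h0 : (fun z => u z ^ (0 + 1)) = u := by funext z; simp
    rw [h0]; simp
  | succ n ih =>
    have h : (fun z => u z ^ (n + 2)) = fun z => u z ^ (n + 1) * u z := by
      funext z; ring
    rw [h, pd_mul (u := fun z => u z ^ (n + 1)) (hu.pow (n + 1)) hu, ih]
    push_cast
    ring

lemma contDiffOn_listProd {U : Set (E q)} {F : Fin q → E q → ℂ}
    (hF : ∀ i, ContDiffOn ℝ (⊤ : ℕ∞) (F i) U) (L : List (Fin q)) :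
    ContDiffOn ℝ (⊤ : ℕ∞) (fun y => (L.map fun i => F i y).prod) U := by
  induction L with
  | nil => simpa using contDiffOn_const
  | cons i L ih =>
    simp only [List.map_cons, List.prod_cons]
    exact (hF i).mul ih

/-- Key computation: the iterated partial derivatives of `g ^ m` on `U`. -/
lemma claimC {U : Set (E q)} (hU : IsOpen U) {g : E q → ℂ}
    (hg : ContDiffOn ℝ (⊤ : ℕ∞) g U) (m : ℕ) :
    ∀ L : List (Fin q), L.length ≤ m → ∃ h : E q → ℂ, ContDiffOn ℝ (⊤ : ℕ∞) h U ∧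
      ∀ y ∈ U, pdL L (fun z => g z ^ m) y =
        (m.descFactorial L.length : ℂ) * (L.map fun i => pd i g y).prod
            * g y ^ (m - L.length)
          + g y ^ (m - L.length + 1) * h y := by
  intro L
  induction L with
  | nil =>
    intro _
    refine ⟨0, contDiffOn_const, fun y hy => ?_⟩
    simp [pdL]
  | cons j L ih =>
    intro hlen
    have hk : L.length < m := by simpa using hlen
    obtain ⟨h, hh, heq⟩ := ih (le_of_lt hk)
    set k := L.length with hkdef
    set P : E q → ℂ := fun y => (L.map fun i => pd i g y).prod with hPdef
    have hP : ContDiffOn ℝ (⊤ : ℕ∞) P U := contDiffOn_listProd (fun i => contDiffOn_pd hU hg i) L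
    set c : ℂ := (m.descFactorial k : ℂ) with hcdef
    refine ⟨fun z => c * pd j P z + ((m - k + 1 : ℕ) : ℂ) * pd j g z * h z
        + g z * pd j h z, ?_, ?_⟩
    · exact ((contDiffOn_const.mul (contDiffOn_pd hU hP j)).add
        ((contDiffOn_const.mul (contDiffOn_pd hU hg j)).mul hh)).add
        (hg.mul (contDiffOn_pd hU hh j))
    · intro y hy
      have hyU : U ∈ nhds y := hU.mem_nhds hy
      have dg : DifferentiableAt ℝ g y := diffAt_of_contDiffOn hU hg hy
      have dP : DifferentiableAt ℝ P y := diffAt_of_contDiffOn hU hP hy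
      have dh : DifferentiableAt ℝ h y := diffAt_of_contDiffOn hU hh hy
      have e1 : m - k = (m - (k + 1)) + 1 := by omega
      have step1 : pdL (j :: L) (fun z => g z ^ m) y
          = pd j (fun z => c * P z * g z ^ (m - k) + g z ^ (m - k + 1) * h z) y := by
        rw [pdL_cons]
        apply pd_congr
        filter_upwards [hyU] with z hz using heq z hz
      rw [step1]
      set n := m - (k + 1) with hndef
      rw [show m - k = n + 1 from e1]
      have d1 : DifferentiableAt ℝ (fun z => c * P z * g z ^ (n + 1)) y :=
        ((differentiableAt_const c).mul dP).mul (dg.pow _)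
      have d2 : DifferentiableAt ℝ (fun z => g z ^ (n + 1 + 1) * h z) y :=
        (dg.pow _).mul dh
      rw [pd_add d1 d2,
        pd_mul (u := fun z => c * P z) (v := fun z => g z ^ (n + 1)) ((differentiableAt_const c).mul dP) (dg.pow (n + 1)),
        pd_const_mul c dP, pd_pow dg n,
        pd_mul (u := fun z => g z ^ (n + 1 + 1)) (dg.pow (n + 1 + 1)) dh, pd_pow dg (n + 1)]
      simp only [List.map_cons, List.prod_cons, List.length_cons, ← hkdef]
      rw [Nat.descFactorial_succ, show m - (k + 1) = n from rfl,
        show m - k = n + 1 from e1]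
      push_cast
      ring

lemma mpd_pow_eval {U : Set (E q)} (hU : IsOpen U) {g : E q → ℂ}
    (hg : ContDiffOn ℝ (⊤ : ℕ∞) g U) {x : E q} (hx : x ∈ U) (hx0 : g x = 0) (m : ℕ)
    (s : Fin q → ℕ) (hs : ∑ i, s i ≤ m) :
    mpd s (fun z => g z ^ m) x
      = if ∑ i, s i = m then (m.factorial : ℂ) * ∏ i, pd i g x ^ s i else 0 := by
  set L := (List.finRange q).flatMap fun i => List.replicate (s i) i with hLdef
  have hlen : L.length = ∑ i, s i := by
    rw [hLdef, List.length_flatMap, Fin.sum_univ_def]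
    simp [Function.comp_def, List.length_replicate]
  have hprodaux : ∀ (F : Fin q → ℂ) (l : List (Fin q)),
      ((l.flatMap fun i => List.replicate (s i) i).map F).prod
        = (l.map fun i => F i ^ s i).prod := by
    intro F l
    induction l with
    | nil => rfl
    | cons i l ih =>
      simp [List.flatMap_cons, List.map_append, List.prod_append, ih]
  have hprod : (L.map fun i => pd i g x).prod = ∏ i, pd i g x ^ s i := by
    rw [hLdef, hprodaux, Fin.prod_univ_def]
  obtain ⟨h, hh, heq⟩ := claimC hU hg m L (by rw [hlen]; exact hs)
  rw [mpd_eq_pdL, ← hLdef, heq x hx, hlen, hprod]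
  by_cases hcase : ∑ i, s i = m
  · rw [if_pos hcase, hcase]
    simp [hx0, Nat.descFactorial_self]
  · rw [if_neg hcase]
    have h1 : m - ∑ i, s i ≠ 0 := by omega
    rw [hx0, zero_pow h1, zero_pow (by omega : m - ∑ i, s i + 1 ≠ 0)]
    ring

lemma diffOp_eval {U : Set (E q)} (hU : IsOpen U) {g : E q → ℂ}
    (hg : ContDiffOn ℝ (⊤ : ℕ∞) g U) {x : E q} (hx : x ∈ U) (hx0 : g x = 0) (m : ℕ)
    (cc : (Fin q → ℕ) → E q → ℂ) (ρ : Fin q → ℝ) (hρ : ∀ i, pd i g x = (ρ i : ℂ)) :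
    diffOp m cc (fun z => g z ^ m) x = (m.factorial : ℂ) * principalSymbol m cc x ρ := by
  unfold diffOp principalSymbol
  rw [Finset.mul_sum]
  have hsub : (Finset.Iic (fun _ : Fin q => m)).filter (fun s => ∑ i, s i = m)
      ⊆ (Finset.Iic (fun _ : Fin q => m)).filter (fun s => ∑ i, s i ≤ m) := by
    intro s hs
    simp only [Finset.mem_filter] at hs ⊢
    exact ⟨hs.1, le_of_eq hs.2⟩
  rw [← Finset.sum_subset hsub ?_]
  · apply Finset.sum_congr rfl
    intro s hs
    simp only [Finset.mem_filter] at hs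
    rw [mpd_pow_eval hU hg hx hx0 m s (le_of_eq hs.2), if_pos hs.2]
    simp only [hρ]
    ring
  · intro s hs hns
    simp only [Finset.mem_filter] at hs hns
    have : ¬ (∑ i, s i = m) := fun hc => hns ⟨hs.1, hc⟩
    rw [mpd_pow_eval hU hg hx hx0 m s hs.2, if_neg this, mul_zero]

end Aux

theorem principal_symbol_intertwined
    {q m : ℕ} (hq : 1 ≤ q) (hm : 1 ≤ m)
    (U V : Set (E q)) (hU : IsOpen U) (hV : IsOpen V)
    (a b : (Fin q → ℕ) → E q → ℂ)
    (ha : ∀ s : Fin q → ℕ, ∑ i, s i ≤ m → ContDiffOn ℝ (⊤ : ℕ∞) (a s) U)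
    (hb : ∀ s : Fin q → ℕ, ∑ i, s i ≤ m → ContDiffOn ℝ (⊤ : ℕ∞) (b s) V)
    (ψ : E q → E q) (hψ : ContDiffOn ℝ (⊤ : ℕ∞) ψ U) (hmaps : Set.MapsTo ψ U V)
    (hcomm : ∀ f : E q → ℂ, ContDiffOn ℝ (⊤ : ℕ∞) f V →
      ∀ x ∈ U, diffOp m b f (ψ x) = diffOp m a (f ∘ ψ) x) :
    ∀ x ∈ U, ∀ ξ : Fin q → ℝ,
      principalSymbol m a x
        (fun i => ∑ j, ξ j * (fderiv ℝ ψ x (EuclideanSpace.single i 1)) j)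
      = principalSymbol m b (ψ x) ξ := by
  intro x hx ξ
  set T : E q →L[ℝ] ℂ :=
    ∑ j : Fin q, ξ j • ((Complex.ofRealCLM).comp (EuclideanSpace.proj j)) with hTdef
  have hT : ∀ w : E q, T w = ∑ j, (ξ j : ℂ) * (w j : ℂ) := by
    intro w
    rw [hTdef]
    simp [ContinuousLinearMap.sum_apply, Complex.real_smul]
  have hTsingle : ∀ i : Fin q, T (EuclideanSpace.single i 1) = (ξ i : ℂ) := by
    intro i
    rw [hT]
    rw [Finset.sum_eq_single i]
    · simp [EuclideanSpace.single_apply]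
    · intro j _ hj
      simp [EuclideanSpace.single_apply, hj]
    · simp
  set f : E q → ℂ := fun y => T y - T (ψ x) with hfdef
  have hfC : ContDiff ℝ (⊤ : ℕ∞) f := T.contDiff.sub contDiff_const
  have hf0 : f (ψ x) = 0 := sub_self _
  have hfd : ∀ y : E q, HasFDerivAt f T y := fun y => T.hasFDerivAt.sub_const _
  have pd_f : ∀ (i : Fin q) (y : E q), pd i f y = (ξ i : ℂ) := by
    intro i y
    unfold pd
    rw [(hfd y).fderiv]
    exact hTsingle i
  set g : E q → ℂ := fun y => f (ψ y) with hgdef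
  have hgC : ContDiffOn ℝ (⊤ : ℕ∞) g U := hfC.comp_contDiffOn hψ
  have hg0 : g x = 0 := hf0
  have hψd : DifferentiableAt ℝ ψ x :=
    (hψ.contDiffAt (hU.mem_nhds hx)).differentiableAt (by simp)
  have pd_g : ∀ i : Fin q, pd i g x
      = ((∑ j, ξ j * (fderiv ℝ ψ x (EuclideanSpace.single i 1)) j : ℝ) : ℂ) := by
    intro i
    unfold pd
    have hcomp : HasFDerivAt g (T.comp (fderiv ℝ ψ x)) x :=
      (hfd (ψ x)).comp x hψd.hasFDerivAt
    rw [hcomp.fderiv, ContinuousLinearMap.comp_apply, hT]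
    push_cast
    rfl
  have hFC : ContDiffOn ℝ (⊤ : ℕ∞) (fun y => f y ^ m) V := (hfC.pow m).contDiffOn
  have key := hcomm (fun y => f y ^ m) hFC x hx
  have hLHS : diffOp m b (fun y => f y ^ m) (ψ x)
      = (m.factorial : ℂ) * principalSymbol m b (ψ x) ξ :=
    diffOp_eval hV hfC.contDiffOn (hmaps hx) hf0 m b ξ (fun i => pd_f i (ψ x))
  have hcompeq : (fun y => f y ^ m) ∘ ψ = fun z => g z ^ m := rfl
  have hRHS : diffOp m a ((fun y => f y ^ m) ∘ ψ) x
      = (m.factorial : ℂ) * principalSymbol m a x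
          (fun i => ∑ j, ξ j * (fderiv ℝ ψ x (EuclideanSpace.single i 1)) j) := by
    rw [hcompeq]
    exact diffOp_eval hU hgC hx hg0 m a _ pd_g
  rw [hLHS, hRHS] at key
  have hfac : (m.factorial : ℂ) ≠ 0 := Nat.cast_ne_zero.mpr m.factorial_ne_zero
  exact (mul_left_cancel₀ hfac key).symm
end

section
/- Let q ≥ 1 and m ≥ 1. Let p : ℝ^q → ℂ be continuous, positively homogeneous of degree m (p(t • ξ) = tᵐ · p(ξ) for every real t ≥ 0 and every ξ ∈ ℝ^q), and elliptic (p(ξ) ≠ 0 for every ξ ≠ 0). Then there exists μ > 0 such that every linear map A : ℝ^q → ℝ^q satisfying p(A ξ) = p(ξ) for all ξ ∈ ℝ^q has operator norm at most μ with respect to the Euclidean norm: ‖A v‖ ≤ μ ‖v‖ for all v ∈ ℝ^q. -/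
/-!
Homogeneity and compactness of the closed unit ball and sphere give `c ‖ξ‖ᵐ ≤ ‖p ξ‖ ≤ C ‖ξ‖ᵐ` with `c > 0`,
the lower bound by ellipticity. If `p ∘ A = p`, then
`c ‖A ξ‖ᵐ ≤ ‖p (A ξ)‖ = ‖p ξ‖ ≤ C ‖ξ‖ᵐ`, so `‖A ξ‖ ≤ (C / c)^(1/m) ‖ξ‖`.
-/

open Metric

section PosHomogeneous

variable {E F : Type*} [NormedAddCommGroup E] [NormedSpace ℝ E]
  [NormedAddCommGroup F] [NormedSpace ℝ F] {p : E → F} {m : ℕ}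

def IsPosHomogeneous (m : ℕ) (p : E → F) : Prop :=
  ∀ t : ℝ, 0 ≤ t → ∀ ξ : E, p (t • ξ) = t ^ m • p ξ

lemma smul_inv_norm_smul_self (ξ : E) : ‖ξ‖ • ‖ξ‖⁻¹ • ξ = ξ := by
  rcases eq_or_ne ξ 0 with rfl | hξ
  · simp
  · exact smul_inv_smul₀ (norm_ne_zero_iff.2 hξ) ξ

lemma norm_inv_norm_smul_le_one (ξ : E) : ‖‖ξ‖⁻¹ • ξ‖ ≤ 1 := by
  rcases eq_or_ne ξ 0 with rfl | hξ
  · simp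
  · exact (norm_smul_inv_norm hξ).le

namespace IsPosHomogeneous

lemma norm_apply_eq (hp : IsPosHomogeneous m p) (ξ : E) :
    ‖p ξ‖ = ‖ξ‖ ^ m * ‖p (‖ξ‖⁻¹ • ξ)‖ := by
  conv_lhs => rw [← smul_inv_norm_smul_self ξ]
  rw [hp _ (norm_nonneg ξ), norm_smul, norm_pow, norm_norm]

variable [ProperSpace E]

lemma exists_norm_le_mul_norm_pow (hp : IsPosHomogeneous m p) (hcont : Continuous p) :
    ∃ C, ∀ ξ, ‖p ξ‖ ≤ C * ‖ξ‖ ^ m := by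
  obtain ⟨C, hC⟩ := (isCompact_closedBall (0 : E) 1).exists_bound_of_continuousOn
    hcont.continuousOn
  refine ⟨C, fun ξ => ?_⟩
  rw [hp.norm_apply_eq ξ, mul_comm C]
  gcongr
  exact hC _ (mem_closedBall_zero_iff.2 (norm_inv_norm_smul_le_one ξ))

lemma exists_pos_mul_norm_pow_le (hp : IsPosHomogeneous m p) (hcont : Continuous p)
    (hm : m ≠ 0) (hne : ∀ ξ, ξ ≠ 0 → p ξ ≠ 0) :
    ∃ c, 0 < c ∧ ∀ ξ, c * ‖ξ‖ ^ m ≤ ‖p ξ‖ := by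
  obtain ⟨c, hc, hcp⟩ := (isCompact_sphere (0 : E) 1).exists_forall_le'
    (continuous_norm.comp hcont).continuousOn (a := 0)
    fun u hu => norm_pos_iff.2 (hne u (ne_of_mem_sphere hu one_ne_zero))
  refine ⟨c, hc, fun ξ => ?_⟩
  rcases eq_or_ne ξ 0 with rfl | hξ
  · simp [hm]
  · rw [hp.norm_apply_eq ξ, mul_comm c]
    gcongr
    exact hcp _ (mem_sphere_zero_iff_norm.2 (norm_smul_inv_norm hξ))

theorem exists_norm_le_mul_norm_of_comp_eq (hp : IsPosHomogeneous m p) (hcont : Continuous p)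
    (hm : m ≠ 0) (hne : ∀ ξ, ξ ≠ 0 → p ξ ≠ 0) :
    ∃ μ, 0 < μ ∧ ∀ f : E → E, (∀ ξ, p (f ξ) = p ξ) → ∀ v, ‖f v‖ ≤ μ * ‖v‖ := by
  obtain ⟨C, hC⟩ := hp.exists_norm_le_mul_norm_pow hcont
  obtain ⟨c, hc, hcp⟩ := hp.exists_pos_mul_norm_pow_le hcont hm hne
  set μ := max 1 (C / c)
  have hμ : 1 ≤ μ := le_max_left _ _
  refine ⟨μ, zero_lt_one.trans_le hμ, fun f hf v => ?_⟩
  have hpow : ‖f v‖ ^ m ≤ (μ * ‖v‖) ^ m :=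
    calc ‖f v‖ ^ m ≤ ‖p (f v)‖ / c := by rw [le_div_iff₀ hc, mul_comm]; exact hcp _
      _ = ‖p v‖ / c := by rw [hf]
      _ ≤ C / c * ‖v‖ ^ m := by rw [div_mul_eq_mul_div]; gcongr; exact hC v
      _ ≤ μ ^ m * ‖v‖ ^ m := by
        gcongr
        exact (le_max_right _ _).trans (le_self_pow₀ hμ hm)
      _ = (μ * ‖v‖) ^ m := (mul_pow _ _ _).symm
  exact le_of_pow_le_pow_left₀ hm (by positivity) hpow

end IsPosHomogeneous

end PosHomogeneous

theorem symbol_preserving_maps_uniformly_bounded_above_general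
    {q m : ℕ} (hm : 1 ≤ m)
    (p : EuclideanSpace ℝ (Fin q) → ℂ)
    (hp_cont : Continuous p)
    (hp_hom : ∀ t : ℝ, 0 ≤ t → ∀ ξ : EuclideanSpace ℝ (Fin q),
      p (t • ξ) = (t : ℂ) ^ m * p ξ)
    (hp_ell : ∀ ξ : EuclideanSpace ℝ (Fin q), ξ ≠ 0 → p ξ ≠ 0) :
    ∃ μ : ℝ, 0 < μ ∧
      ∀ A : EuclideanSpace ℝ (Fin q) →ₗ[ℝ] EuclideanSpace ℝ (Fin q),
        (∀ ξ, p (A ξ) = p ξ) → ∀ v, ‖A v‖ ≤ μ * ‖v‖ := by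
  have hhom : IsPosHomogeneous m p := fun t ht ξ => by
    rw [hp_hom t ht ξ, Complex.real_smul, Complex.ofReal_pow]
  obtain ⟨μ, hμ, hbound⟩ :=
    hhom.exists_norm_le_mul_norm_of_comp_eq hp_cont (by omega) hp_ell
  exact ⟨μ, hμ, fun A hA => hbound A hA⟩

/-- Uniform upper bound: every linear map preserving a continuous, positively homogeneous
(of degree `m`), elliptic symbol `p` on Euclidean `ℝ^q` has operator norm at most some
uniform `μ > 0`. -/
theorem symbol_preserving_maps_uniformly_bounded_above
    {q m : ℕ} (hq : 1 ≤ q) (hm : 1 ≤ m)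
    (p : EuclideanSpace ℝ (Fin q) → ℂ)
    (hp_cont : Continuous p)
    (hp_hom : ∀ t : ℝ, 0 ≤ t → ∀ ξ : EuclideanSpace ℝ (Fin q),
      p (t • ξ) = (t : ℂ) ^ m * p ξ)
    (hp_ell : ∀ ξ : EuclideanSpace ℝ (Fin q), ξ ≠ 0 → p ξ ≠ 0) :
    ∃ μ : ℝ, 0 < μ ∧
      ∀ A : EuclideanSpace ℝ (Fin q) →ₗ[ℝ] EuclideanSpace ℝ (Fin q),
        (∀ ξ, p (A ξ) = p ξ) → ∀ v, ‖A v‖ ≤ μ * ‖v‖ :=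
  symbol_preserving_maps_uniformly_bounded_above_general hm p hp_cont hp_hom hp_ell
end

section
/- Let q ≥ 1 and m ≥ 1. Let p : ℝ^q → ℂ be continuous, positively homogeneous of degree m (p(t • ξ) = tᵐ · p(ξ) for every real t ≥ 0 and every ξ ∈ ℝ^q), and elliptic (p(ξ) ≠ 0 for every ξ ≠ 0). Then there exists λ > 0 such that every linear map A : ℝ^q → ℝ^q satisfying p(A ξ) = p(ξ) for all ξ ∈ ℝ^q satisfies ‖A v‖ ≥ λ ‖v‖ for all v ∈ ℝ^q (Euclidean norm); in particular every such A is a linear automorphism of ℝ^q. -/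
/-!
By homogeneity, `‖p ξ‖` is `‖ξ‖ ^ m` times the value of `‖p‖` at the unit vector `ξ / ‖ξ‖`,
and on the compact unit sphere `‖p‖` lies between constants `0 < c ≤ C` (ellipticity gives
`c > 0`). So `c ‖v‖ ^ m ≤ ‖p v‖ = ‖p (A v)‖ ≤ C ‖A v‖ ^ m` for every symbol-preserving `A`,
i.e. `‖A v‖ ≥ (c / C) ^ (1 / m) ‖v‖`; an injective endomorphism of `ℝ^q` is bijective.
-/

open Metric

section HomogeneousBounds

variable {E F : Type*} [NormedAddCommGroup E] [NormedSpace ℝ E] [NormedAddCommGroup F]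
  {p : E → F} {m : ℕ}

theorem map_zero_of_norm_homogeneous (hm : m ≠ 0)
    (hhom : ∀ t : ℝ, 0 ≤ t → ∀ ξ, ‖p (t • ξ)‖ = t ^ m * ‖p ξ‖) : p 0 = 0 := by
  simpa [zero_pow hm] using hhom 0 le_rfl 0

theorem norm_map_eq_norm_pow_mul_norm_map_normalize
    (hhom : ∀ t : ℝ, 0 ≤ t → ∀ ξ, ‖p (t • ξ)‖ = t ^ m * ‖p ξ‖) {ξ : E} (hξ : ξ ≠ 0) :
    ‖p ξ‖ = ‖ξ‖ ^ m * ‖p (‖ξ‖⁻¹ • ξ)‖ := by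
  conv_lhs => rw [← smul_inv_smul₀ (norm_ne_zero_iff.mpr hξ) ξ]
  exact hhom _ (norm_nonneg ξ) _

variable [FiniteDimensional ℝ E]

theorem exists_pos_mul_norm_pow_le_norm_map (hm : m ≠ 0) (hcont : Continuous p)
    (hhom : ∀ t : ℝ, 0 ≤ t → ∀ ξ, ‖p (t • ξ)‖ = t ^ m * ‖p ξ‖)
    (hell : ∀ ξ, ξ ≠ 0 → p ξ ≠ 0) :
    ∃ c > 0, ∀ ξ, c * ‖ξ‖ ^ m ≤ ‖p ξ‖ := by
  obtain ⟨c, hc, hc_le⟩ := (isCompact_sphere (0 : E) 1).exists_forall_le'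
    hcont.norm.continuousOn fun u hu => norm_pos_iff.mpr (hell u (ne_of_mem_sphere hu one_ne_zero))
  refine ⟨c, hc, fun ξ => ?_⟩
  rcases eq_or_ne ξ 0 with rfl | hξ
  · simp [zero_pow hm]
  · rw [norm_map_eq_norm_pow_mul_norm_map_normalize hhom hξ, mul_comm]
    gcongr
    exact hc_le _ (by simpa using norm_smul_inv_norm (𝕜 := ℝ) hξ)

theorem exists_pos_norm_map_le_mul_norm_pow (hm : m ≠ 0) (hcont : Continuous p)
    (hhom : ∀ t : ℝ, 0 ≤ t → ∀ ξ, ‖p (t • ξ)‖ = t ^ m * ‖p ξ‖) :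
    ∃ C > 0, ∀ ξ, ‖p ξ‖ ≤ C * ‖ξ‖ ^ m := by
  obtain ⟨C, hC⟩ := (isCompact_sphere (0 : E) 1).exists_bound_of_continuousOn hcont.continuousOn
  refine ⟨max C 1, by positivity, fun ξ => ?_⟩
  rcases eq_or_ne ξ 0 with rfl | hξ
  · simp [map_zero_of_norm_homogeneous hm hhom]
  · rw [norm_map_eq_norm_pow_mul_norm_map_normalize hhom hξ, mul_comm]
    gcongr
    exact (hC _ (by simpa using norm_smul_inv_norm (𝕜 := ℝ) hξ)).trans (le_max_left C 1)

theorem exists_pos_mul_norm_le_norm_of_map_comp_eq (hm : m ≠ 0) (hcont : Continuous p)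
    (hhom : ∀ t : ℝ, 0 ≤ t → ∀ ξ, ‖p (t • ξ)‖ = t ^ m * ‖p ξ‖)
    (hell : ∀ ξ, ξ ≠ 0 → p ξ ≠ 0) :
    ∃ lam > 0, ∀ A : E → E, (∀ ξ, p (A ξ) = p ξ) → ∀ v, lam * ‖v‖ ≤ ‖A v‖ := by
  obtain ⟨c, hc, hlower⟩ := exists_pos_mul_norm_pow_le_norm_map hm hcont hhom hell
  obtain ⟨C, hC, hupper⟩ := exists_pos_norm_map_le_mul_norm_pow hm hcont hhom
  refine ⟨(c / C) ^ (m⁻¹ : ℝ), by positivity, fun A hA v => ?_⟩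
  refine le_of_pow_le_pow_left₀ hm (norm_nonneg _) ?_
  rw [mul_pow, Real.rpow_inv_natCast_pow (by positivity) hm, div_mul_eq_mul_div,
    div_le_iff₀' hC]
  calc c * ‖v‖ ^ m ≤ ‖p v‖ := hlower v
    _ = ‖p (A v)‖ := by rw [hA]
    _ ≤ C * ‖A v‖ ^ m := hupper (A v)

end HomogeneousBounds

theorem symbol_preserving_maps_uniformly_bounded_below_general
    {q m : ℕ} (hm : 1 ≤ m)
    (p : EuclideanSpace ℝ (Fin q) → ℂ)
    (hp_cont : Continuous p)
    (hp_hom : ∀ t : ℝ, 0 ≤ t → ∀ ξ : EuclideanSpace ℝ (Fin q),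
      p (t • ξ) = (t : ℂ) ^ m * p ξ)
    (hp_ell : ∀ ξ : EuclideanSpace ℝ (Fin q), ξ ≠ 0 → p ξ ≠ 0) :
    ∃ lam : ℝ, 0 < lam ∧
      ∀ A : EuclideanSpace ℝ (Fin q) →ₗ[ℝ] EuclideanSpace ℝ (Fin q),
        (∀ ξ, p (A ξ) = p ξ) →
          (∀ v, lam * ‖v‖ ≤ ‖A v‖) ∧ Function.Bijective A := by
  have hnorm_hom : ∀ t : ℝ, 0 ≤ t → ∀ ξ, ‖p (t • ξ)‖ = t ^ m * ‖p ξ‖ := fun t ht ξ => by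
    rw [hp_hom t ht ξ, norm_mul, norm_pow, Complex.norm_real, Real.norm_of_nonneg ht]
  obtain ⟨lam, hlam, hbound⟩ :=
    exists_pos_mul_norm_le_norm_of_map_comp_eq (Nat.one_le_iff_ne_zero.mp hm) hp_cont hnorm_hom hp_ell
  refine ⟨lam, hlam, fun A hA => ⟨hbound A hA, ?_⟩⟩
  have hinj : Function.Injective A := (injective_iff_map_eq_zero A).mpr fun v hv =>
    norm_le_zero_iff.mp <| nonpos_of_mul_nonpos_right (by simpa [hv] using hbound A hA v) hlam
  exact ⟨hinj, LinearMap.injective_iff_surjective.mp hinj⟩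

/-- Uniform lower bound: every linear map preserving a continuous, positively homogeneous
(of degree `m`), elliptic symbol `p` on Euclidean `ℝ^q` satisfies `‖A v‖ ≥ λ ‖v‖` for a
uniform `λ > 0`; in particular every such map is a linear automorphism. -/
theorem symbol_preserving_maps_uniformly_bounded_below
    {q m : ℕ} (hq : 1 ≤ q) (hm : 1 ≤ m)
    (p : EuclideanSpace ℝ (Fin q) → ℂ)
    (hp_cont : Continuous p)
    (hp_hom : ∀ t : ℝ, 0 ≤ t → ∀ ξ : EuclideanSpace ℝ (Fin q),
      p (t • ξ) = (t : ℂ) ^ m * p ξ)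
    (hp_ell : ∀ ξ : EuclideanSpace ℝ (Fin q), ξ ≠ 0 → p ξ ≠ 0) :
    ∃ lam : ℝ, 0 < lam ∧
      ∀ A : EuclideanSpace ℝ (Fin q) →ₗ[ℝ] EuclideanSpace ℝ (Fin q),
        (∀ ξ, p (A ξ) = p ξ) →
          (∀ v, lam * ‖v‖ ≤ ‖A v‖) ∧ Function.Bijective A :=
  symbol_preserving_maps_uniformly_bounded_below_general hm p hp_cont hp_hom hp_ell
end

section
/- Let q ≥ 1 and m ≥ 2, and let P = Σ_{|s| ≤ m} a_s ∂^s be a differential operator on ℝ^q with constant complex coefficients a_s ∈ ℂ which is elliptic, i.e. its principal symbol p(ξ) = Σ_{|s| = m} a_s ξ₁^{s₁} ⋯ ξ_q^{s_q} is nonzero for every ξ ≠ 0. Then there exist constants 0 < λ ≤ μ such that for every pair of open subsets U, V ⊆ ℝ^q, every smooth map ψ : U → V satisfying P(f ∘ ψ) = (P f) ∘ ψ on U for all smooth f : V → ℂ, every x ∈ U, and every v ∈ ℝ^q, one has λ ‖v‖ ≤ ‖(Dψ_x)(v)‖ ≤ μ ‖v‖, where Dψ_x = fderiv ℝ ψ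 x and ‖·‖ is the Euclidean norm. -/
open Finset

/-- The constant-coefficient differential operator of order `≤ m`:
`(P f)(x) = Σ_{|s| ≤ m} a_s · (∂^s f)(x)`. -/
noncomputable def diffOpConst {q : ℕ} (m : ℕ) (a : (Fin q → ℕ) → ℂ)
    (f : E q → ℂ) (x : E q) : ℂ :=
  ∑ s ∈ (Finset.Iic (fun _ : Fin q => m)).filter (fun s => ∑ i, s i ≤ m),
    a s * mpd s f x

noncomputable def LC {q : ℕ} (ξ : E q) : E q →L[ℝ] ℂ := Complex.ofRealCLM.comp (innerSL ℝ ξ)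
noncomputable def fexp {q : ℕ} (ξ : E q) (t : ℝ) (y : E q) : ℂ :=
  Complex.exp ((t:ℂ) * Complex.I * LC ξ y)
lemma fexp_contDiff {q : ℕ} (ξ : E q) (t : ℝ) : ContDiff ℝ (⊤ : ℕ∞) (fexp ξ t) := by
  apply Complex.contDiff_exp.comp
  exact contDiff_const.mul (LC ξ).contDiff

/-- `h t` agrees on `U` with `exp(i t ⟨ξ, ψ y⟩)` times a polynomial in `t` of degree `≤ k`
with coefficients smooth on `U` and prescribed leading coefficient. -/
def PolyExp {q : ℕ} (U : Set (E q)) (ψ : E q → E q) (ξ : E q) (k : ℕ)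
    (lead : E q → ℂ) (h : ℝ → E q → ℂ) : Prop :=
  ∃ c : ℕ → E q → ℂ,
    (∀ j, ContDiffOn ℝ (⊤ : ℕ∞) (c j) U) ∧
    (∀ j, k < j → c j = fun _ => 0) ∧
    Set.EqOn (c k) lead U ∧
    ∀ t : ℝ, ∀ y ∈ U, h t y =
      Complex.exp ((t:ℂ) * Complex.I * LC ξ (ψ y)) *
        ∑ j ∈ Finset.range (k+1), c j y * (t:ℂ)^j
lemma polyExp_congr_lead {q : ℕ} {U : Set (E q)} {ψ ξ k lead h} {lead' : E q → ℂ}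
    (he : Set.EqOn lead lead' U) (hp : PolyExp U ψ ξ k lead h) :
    PolyExp U ψ ξ k lead' h := by
  obtain ⟨c, h1, h2, h3, h4⟩ := hp
  exact ⟨c, h1, h2, h3.trans he, h4⟩
lemma polyExp_base {q : ℕ} (U : Set (E q)) (ψ : E q → E q) (ξ : E q) :
    PolyExp U ψ ξ 0 (fun _ => 1) (fun t y => fexp ξ t (ψ y)) := by
  refine ⟨fun j => if j = 0 then (fun _ => 1) else (fun _ => 0), ?_, ?_, ?_, ?_⟩
  · intro j
    by_cases hj : j = 0 <;> simp [hj] <;> exact contDiffOn_const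
  · intro j hj
    have : j ≠ 0 := by omega
    simp [this]
  · intro y _; simp
  · intro t y _; simp [fexp]
lemma polyExp_pd {q : ℕ} {U : Set (E q)} {ψ : E q → E q} {ξ : E q} {k : ℕ}
    {lead : E q → ℂ} {h : ℝ → E q → ℂ}
    (hU : IsOpen U) (hψ : ContDiffOn ℝ (⊤ : ℕ∞) ψ U) (i : Fin q)
    (hp : PolyExp U ψ ξ k lead h) :
    PolyExp U ψ ξ (k+1)
      (fun y => Complex.I * LC ξ (fderiv ℝ ψ y (EuclideanSpace.single i 1)) * lead y)
      (fun t y => pd i (h t) y) := by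
  obtain ⟨c, hsm, hz, hlead, heq⟩ := hp
  set e : E q := EuclideanSpace.single i 1 with he
  set ℓ : E q → ℂ := fun y => LC ξ (fderiv ℝ ψ y e) with hℓ
  -- smoothness of ℓ on U
  have hψfd : ContDiffOn ℝ (⊤ : ℕ∞) (fderiv ℝ ψ) U := hψ.fderiv_of_isOpen hU (by simp)
  have hℓsm : ContDiffOn ℝ (⊤ : ℕ∞) ℓ U := by
    have h1 : ContDiffOn ℝ (⊤ : ℕ∞) (fun y => fderiv ℝ ψ y e) U :=
      hψfd.clm_apply contDiffOn_const
    exact (LC ξ).contDiff.comp_contDiffOn h1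
  have hcfd : ∀ j, ContDiffOn ℝ (⊤ : ℕ∞) (fun y => fderiv ℝ (c j) y e) U := fun j =>
    ((hsm j).fderiv_of_isOpen hU (by simp)).clm_apply contDiffOn_const
  refine ⟨fun j y => (if 1 ≤ j then Complex.I * ℓ y * c (j-1) y else 0) + fderiv ℝ (c j) y e,
    ?_, ?_, ?_, ?_⟩
  · intro j
    by_cases hj : 1 ≤ j <;> simp only [hj, if_true, if_false]
    · exact (((contDiffOn_const.mul hℓsm).mul (hsm (j-1)))).add (hcfd j)
    · simpa using (contDiffOn_const (c := (0:ℂ))).add (hcfd j)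
  · intro j hj
    funext y
    have h1 : c (j-1) = fun _ => 0 := hz _ (by omega)
    have h2 : c j = fun _ => 0 := hz _ (by omega)
    by_cases hj1 : 1 ≤ j <;> simp [hj1, h1, h2, fderiv_const]
  · intro y hy
    have h2 : c (k+1) = fun _ => 0 := hz _ (by omega)
    simp only [show 1 ≤ k+1 from by omega, if_true, Nat.add_sub_cancel, h2, fderiv_const]
    simp [hlead hy]
    exact Or.inl rfl
  · intro t y hy
    -- local expressions
    set g : E q → ℂ := fun z => (t:ℂ) * Complex.I * LC ξ (ψ z) with hg
    set S : E q → ℂ := fun z => ∑ j ∈ Finset.range (k+1), c j z * (t:ℂ)^j with hS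
    have hyU : U ∈ nhds y := hU.mem_nhds hy
    have hEE : (h t) =ᶠ[nhds y] (fun z => Complex.exp (g z) * S z) := by
      filter_upwards [hyU] with z hzU
      exact heq t z hzU
    have hψy : HasFDerivAt ψ (fderiv ℝ ψ y) y :=
      ((hψ.differentiableOn (by simp)).differentiableAt hyU).hasFDerivAt
    have hgd : HasFDerivAt g (((t:ℂ) * Complex.I) • ((LC ξ).comp (fderiv ℝ ψ y))) y :=
      (((LC ξ).hasFDerivAt).comp y hψy).const_mul _
    have hexp : HasFDerivAt (fun z => Complex.exp (g z))
        (Complex.exp (g y) • (((t:ℂ) * Complex.I) • ((LC ξ).comp (fderiv ℝ ψ y)))) y :=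
      hgd.cexp
    have hcj : ∀ j, HasFDerivAt (c j) (fderiv ℝ (c j) y) y := fun j =>
      (((hsm j).differentiableOn (by simp)).differentiableAt hyU).hasFDerivAt
    have hSd : HasFDerivAt S (∑ j ∈ Finset.range (k+1), (t:ℂ)^j • fderiv ℝ (c j) y) y := by
      apply HasFDerivAt.fun_sum
      intro j _
      exact (hcj j).mul_const _
    have hE0 : HasFDerivAt (fun z => Complex.exp (g z) * S z)
        (Complex.exp (g y) • (∑ j ∈ Finset.range (k+1), (t:ℂ)^j • fderiv ℝ (c j) y)
          + S y • (Complex.exp (g y) • (((t:ℂ) * Complex.I) • ((LC ξ).comp (fderiv ℝ ψ y))))) y :=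
      hexp.mul hSd
    have hfd : fderiv ℝ (h t) y = _ := hEE.fderiv_eq.trans hE0.fderiv
    have hpd : pd i (h t) y =
        Complex.exp (g y) * (∑ j ∈ Finset.range (k+1), (t:ℂ)^j * (fderiv ℝ (c j) y e))
          + S y * (Complex.exp (g y) * (((t:ℂ) * Complex.I) * ℓ y)) := by
      rw [pd, hfd]
      simp only [ContinuousLinearMap.add_apply, ContinuousLinearMap.smul_apply,
        ContinuousLinearMap.coe_sum', Finset.sum_apply, ContinuousLinearMap.coe_comp',
        Function.comp_apply, smul_eq_mul, hℓ]
      all_goals ring_nf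
      all_goals rfl
    show pd i (h t) y = _
    rw [hpd]
    -- now pure algebra with finite sums
    rw [show Complex.exp ((t:ℂ) * Complex.I * LC ξ (ψ y)) = Complex.exp (g y) from rfl]
    set X := Complex.exp (g y) with hX
    set D : ℕ → ℂ := fun j => fderiv ℝ (c j) y e with hD
    have hck1 : c (k+1) = fun _ => 0 := hz _ (by omega)
    have expand : ∑ j ∈ Finset.range (k+1+1),
        ((if 1 ≤ j then Complex.I * ℓ y * c (j-1) y else 0) + D j) * (t:ℂ)^j
        = (∑ j ∈ Finset.range (k+1), Complex.I * ℓ y * c j y * (t:ℂ)^(j+1))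
          + ∑ j ∈ Finset.range (k+1), D j * (t:ℂ)^j := by
      rw [Finset.sum_congr rfl (fun j _ => add_mul _ _ _), Finset.sum_add_distrib]
      congr 1
      · rw [Finset.sum_range_succ']
        simp only [show ¬ (1 ≤ 0) from by omega, if_false, zero_mul, add_zero]
        apply Finset.sum_congr rfl
        intro j _
        simp [show 1 ≤ j + 1 from by omega]
      · rw [Finset.sum_range_succ]
        have : D (k+1) = 0 := by rw [hD]; simp [hck1, fderiv_const]
        rw [this, zero_mul, add_zero]
    rw [expand, mul_add, add_comm]
    congr 1
    · simp only [hS]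
      rw [Finset.sum_mul, Finset.mul_sum]
      apply Finset.sum_congr rfl
      intro j _
      ring
    · rw [Finset.mul_sum, Finset.mul_sum]
      apply Finset.sum_congr rfl
      intro j _
      ring
lemma polyExp_iter {q : ℕ} {U : Set (E q)} {ψ : E q → E q} {ξ : E q}
    (hU : IsOpen U) (hψ : ContDiffOn ℝ (⊤ : ℕ∞) ψ U) (i : Fin q) (n : ℕ)
    {k : ℕ} {lead : E q → ℂ} {h : ℝ → E q → ℂ}
    (hp : PolyExp U ψ ξ k lead h) :
    PolyExp U ψ ξ (k + n)
      (fun y => (Complex.I * LC ξ (fderiv ℝ ψ y (EuclideanSpace.single i 1)))^n * lead y)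
      (fun t y => (pd i)^[n] (h t) y) := by
  induction n with
  | zero =>
    apply polyExp_congr_lead (lead := lead)
    · intro y _; simp
    · simpa using hp
  | succ n ih =>
    have step := polyExp_pd hU hψ i ih
    have hfun : (fun t y => pd i ((pd i)^[n] (h t)) y) = (fun t y => (pd i)^[n+1] (h t) y) := by
      funext t y
      rw [Function.iterate_succ_apply']
    rw [hfun] at step
    have : k + n + 1 = k + (n+1) := by omega
    rw [this] at step
    apply polyExp_congr_lead ?_ step
    intro y _
    simp only []
    ring
lemma polyExp_fold {q : ℕ} {U : Set (E q)} {ψ : E q → E q} {ξ : E q}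
    (hU : IsOpen U) (hψ : ContDiffOn ℝ (⊤ : ℕ∞) ψ U) (s : Fin q → ℕ) (l : List (Fin q))
    {k : ℕ} {lead : E q → ℂ} {h : ℝ → E q → ℂ}
    (hp : PolyExp U ψ ξ k lead h) :
    PolyExp U ψ ξ (k + (l.map s).sum)
      (fun y => (l.map (fun i =>
          (Complex.I * LC ξ (fderiv ℝ ψ y (EuclideanSpace.single i 1)))^(s i))).prod * lead y)
      (fun t y => l.foldr (fun i g => (pd i)^[s i] g) (h t) y) := by
  induction l with
  | nil =>
    apply polyExp_congr_lead (lead := lead)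
    · intro y _; simp
    · simpa using hp
  | cons i l' ih =>
    have step := polyExp_iter hU hψ i (s i) ih
    have hdeg : k + (l'.map s).sum + s i = k + ((i :: l').map s).sum := by
      simp [List.sum_cons]
      omega
    rw [hdeg] at step
    apply polyExp_congr_lead ?_ step
    intro y _
    simp only [List.map_cons, List.prod_cons]
    ring
lemma mpd_polyExp {q : ℕ} {U : Set (E q)} {ψ : E q → E q}
    (hU : IsOpen U) (hψ : ContDiffOn ℝ (⊤ : ℕ∞) ψ U) (ξ : E q) (s : Fin q → ℕ) :
    PolyExp U ψ ξ (∑ i, s i)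
      (fun y => ∏ i, (Complex.I * LC ξ (fderiv ℝ ψ y (EuclideanSpace.single i 1)))^(s i))
      (fun t y => mpd s (fexp ξ t ∘ ψ) y) := by
  have := polyExp_fold hU hψ s (List.finRange q) (polyExp_base U ψ ξ)
  rw [show (0 + ((List.finRange q).map s).sum) = ∑ i, s i by
    rw [Fin.sum_univ_def]; omega] at this
  apply polyExp_congr_lead ?_ this
  intro y _
  show _ * 1 = ∏ i, (Complex.I * LC ξ (fderiv ℝ ψ y (EuclideanSpace.single i 1)))^(s i)
  rw [mul_one, Fin.prod_univ_def]
lemma poly_vanish {n : ℕ} (b : ℕ → ℂ)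
    (h : ∀ t : ℝ, ∑ j ∈ Finset.range n, b j * (t:ℂ)^j = 0) :
    ∀ j, j < n → b j = 0 := by
  set P : Polynomial ℂ := ∑ j ∈ Finset.range n, Polynomial.C (b j) * Polynomial.X ^ j with hP
  have heval : ∀ t : ℝ, P.eval (t:ℂ) = 0 := by
    intro t
    rw [hP, Polynomial.eval_finset_sum]
    simpa using h t
  have hroots : {x : ℂ | P.IsRoot x}.Infinite := by
    apply Set.infinite_of_injective_forall_mem (f := fun t : ℝ => (t:ℂ))
      (hi := fun s t hst => Complex.ofReal_injective hst)
    intro t; exact heval t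
  have hP0 : P = 0 := P.eq_zero_of_infinite_isRoot hroots
  intro j hj
  have : P.coeff j = b j := by
    rw [hP, Polynomial.finset_sum_coeff]
    simp only [Polynomial.coeff_C_mul, Polynomial.coeff_X_pow]
    simp [Finset.sum_ite_eq, Finset.mem_range, hj]
  rw [← this, hP0]
  simp
lemma polyExp_point {q : ℕ} {U : Set (E q)} {ψ : E q → E q} {ξ : E q} {k : ℕ}
    {lead : E q → ℂ} {h : ℝ → E q → ℂ} (m : ℕ) (hk : k ≤ m)
    (hp : PolyExp U ψ ξ k lead h) {x : E q} (hx : x ∈ U) :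
    ∃ b : ℕ → ℂ, b m = (if k = m then lead x else 0) ∧
      ∀ t : ℝ, h t x = Complex.exp ((t:ℂ) * Complex.I * LC ξ (ψ x)) *
        ∑ j ∈ Finset.range (m+1), b j * (t:ℂ)^j := by
  obtain ⟨c, _, hz, hlead, heq⟩ := hp
  refine ⟨fun j => c j x, ?_, ?_⟩
  · show c m x = _
    by_cases hkm : k = m
    · subst hkm; simp [hlead hx]
    · have hlt : k < m := lt_of_le_of_ne hk hkm
      rw [hz m hlt]
      simp [hkm]
  · intro t
    rw [heq t x hx]
    congr 1
    apply Finset.sum_subset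
    · exact Finset.range_subset_range.mpr (by omega)
    · intro j hj1 hj2
      simp only [Finset.mem_range] at hj1 hj2
      rw [hz j (by omega)]
      simp
noncomputable def psym {q : ℕ} (m : ℕ) (a : (Fin q → ℕ) → ℂ) (ξ : E q) : ℂ :=
  ∑ s ∈ (Finset.Iic (fun _ : Fin q => m)).filter (fun s => ∑ i, s i = m),
    a s * ∏ i, (ξ i : ℂ) ^ s i
lemma symbol_preserved {q mo : ℕ} (a : (Fin q → ℕ) → ℂ)
    {U : Set (E q)} (hU : IsOpen U) {ψ : E q → E q} (hψ : ContDiffOn ℝ (⊤ : ℕ∞) ψ U)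
    (hcomm : ∀ (ξ : E q) (t : ℝ), ∀ x ∈ U,
      diffOpConst mo a (fexp ξ t ∘ ψ) x = diffOpConst mo a (fexp ξ t) (ψ x))
    {x : E q} (hx : x ∈ U) (ξ : E q) :
    psym mo a ((ContinuousLinearMap.adjoint (fderiv ℝ ψ x)) ξ) = psym mo a ξ := by
  set A := fderiv ℝ ψ x with hA
  set w : E q := (ContinuousLinearMap.adjoint A) ξ with hwdef
  set F := (Finset.Iic (fun _ : Fin q => mo)).filter (fun s => ∑ i, s i ≤ mo) with hF
  set F' := (Finset.Iic (fun _ : Fin q => mo)).filter (fun s => ∑ i, s i = mo) with hF'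
  set X : ℝ → ℂ := fun t => Complex.exp ((t:ℂ) * Complex.I * LC ξ (ψ x)) with hX
  have key1 : ∀ s : Fin q → ℕ, s ∈ F → ∃ b : ℕ → ℂ,
      b mo = (if (∑ i, s i) = mo then
        ∏ i, (Complex.I * LC ξ (A (EuclideanSpace.single i 1)))^(s i) else 0) ∧
      ∀ t : ℝ, mpd s (fexp ξ t ∘ ψ) x =
        X t * ∑ j ∈ Finset.range (mo+1), b j * (t:ℂ)^j := by
    intro s hs
    have hle : ∑ i, s i ≤ mo := (Finset.mem_filter.mp hs).2
    obtain ⟨b, hb1, hb2⟩ := polyExp_point mo hle (mpd_polyExp hU hψ ξ s) hx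
    exact ⟨b, hb1, hb2⟩
  have key2 : ∀ s : Fin q → ℕ, s ∈ F → ∃ b : ℕ → ℂ,
      b mo = (if (∑ i, s i) = mo then
        ∏ i, (Complex.I * ((ξ i : ℝ) : ℂ))^(s i) else 0) ∧
      ∀ t : ℝ, mpd s (fexp ξ t) (ψ x) =
        X t * ∑ j ∈ Finset.range (mo+1), b j * (t:ℂ)^j := by
    intro s hs
    have hle : ∑ i, s i ≤ mo := (Finset.mem_filter.mp hs).2
    obtain ⟨b, hb1, hb2⟩ := polyExp_point mo hle
      (mpd_polyExp isOpen_univ contDiff_id.contDiffOn ξ s) (Set.mem_univ (ψ x))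
    refine ⟨b, ?_, ?_⟩
    · rw [hb1]
      by_cases hc : (∑ i, s i) = mo <;> simp only [hc, if_true, if_false]
      apply Finset.prod_congr rfl
      intro i _
      congr 2
      rw [fderiv_id]
      simp [LC, EuclideanSpace.inner_single_right]
    · intro t
      have h := hb2 t
      simp only [id_eq, Function.comp_id] at h
      exact h
  choose! bL hbL1 hbL2 using key1
  choose! bR hbR1 hbR2 using key2
  have main : ∀ t : ℝ, ∑ j ∈ Finset.range (mo+1),
      (∑ s ∈ F, a s * (bL s j - bR s j)) * (t:ℂ)^j = 0 := by
    intro t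
    have hc := hcomm ξ t x hx
    rw [diffOpConst, diffOpConst, ← hF] at hc
    have h1 : ∑ s ∈ F, a s * (X t * ∑ j ∈ Finset.range (mo+1), bL s j * (t:ℂ)^j)
        = ∑ s ∈ F, a s * (X t * ∑ j ∈ Finset.range (mo+1), bR s j * (t:ℂ)^j) := by
      calc ∑ s ∈ F, a s * (X t * ∑ j ∈ Finset.range (mo+1), bL s j * (t:ℂ)^j)
          = ∑ s ∈ F, a s * mpd s (fexp ξ t ∘ ψ) x :=
            (Finset.sum_congr rfl fun s hs => by rw [hbL2 s hs t])
        _ = ∑ s ∈ F, a s * mpd s (fexp ξ t) (ψ x) := hc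
        _ = ∑ s ∈ F, a s * (X t * ∑ j ∈ Finset.range (mo+1), bR s j * (t:ℂ)^j) :=
            (Finset.sum_congr rfl fun s hs => by rw [hbR2 s hs t])
    have h2 : X t * (∑ s ∈ F, a s * ((∑ j ∈ Finset.range (mo+1), bL s j * (t:ℂ)^j)
        - ∑ j ∈ Finset.range (mo+1), bR s j * (t:ℂ)^j)) = 0 := by
      have h1' := sub_eq_zero_of_eq h1
      calc X t * (∑ s ∈ F, a s * ((∑ j ∈ Finset.range (mo+1), bL s j * (t:ℂ)^j)
            - ∑ j ∈ Finset.range (mo+1), bR s j * (t:ℂ)^j))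
          = (∑ s ∈ F, a s * (X t * ∑ j ∈ Finset.range (mo+1), bL s j * (t:ℂ)^j))
            - ∑ s ∈ F, a s * (X t * ∑ j ∈ Finset.range (mo+1), bR s j * (t:ℂ)^j) := by
            rw [Finset.mul_sum, ← Finset.sum_sub_distrib]
            exact Finset.sum_congr rfl fun s _ => by ring
        _ = 0 := h1'
    have h3 : ∑ s ∈ F, a s * ((∑ j ∈ Finset.range (mo+1), bL s j * (t:ℂ)^j)
        - ∑ j ∈ Finset.range (mo+1), bR s j * (t:ℂ)^j) = 0 := by
      rcases mul_eq_zero.mp h2 with h | h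
      · exact absurd h (Complex.exp_ne_zero _)
      · exact h
    calc ∑ j ∈ Finset.range (mo+1), (∑ s ∈ F, a s * (bL s j - bR s j)) * (t:ℂ)^j
        = ∑ j ∈ Finset.range (mo+1), ∑ s ∈ F, a s * (bL s j - bR s j) * (t:ℂ)^j := by
          exact Finset.sum_congr rfl fun j _ => Finset.sum_mul _ _ _
      _ = ∑ s ∈ F, ∑ j ∈ Finset.range (mo+1), a s * (bL s j - bR s j) * (t:ℂ)^j :=
          Finset.sum_comm
      _ = ∑ s ∈ F, a s * ((∑ j ∈ Finset.range (mo+1), bL s j * (t:ℂ)^j)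
          - ∑ j ∈ Finset.range (mo+1), bR s j * (t:ℂ)^j) := by
          apply Finset.sum_congr rfl
          intro s _
          rw [← Finset.sum_sub_distrib, Finset.mul_sum]
          exact Finset.sum_congr rfl fun j _ => by ring
      _ = 0 := h3
  have hmo : ∑ s ∈ F, a s * (bL s mo - bR s mo) = 0 :=
    poly_vanish _ main mo (by omega)
  have hsub : F' ⊆ F := by
    intro s hs
    rw [hF'] at hs
    rw [hF]
    rw [Finset.mem_filter] at hs ⊢
    exact ⟨hs.1, le_of_eq hs.2⟩
  have hvan : ∀ s ∈ F, s ∉ F' → a s * (bL s mo - bR s mo) = 0 := by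
    intro s hsF hsF'
    have hne : ¬ (∑ i, s i = mo) := by
      intro hcon
      apply hsF'
      rw [hF', Finset.mem_filter]
      exact ⟨(Finset.mem_filter.mp hsF).1, hcon⟩
    rw [hbL1 s hsF, hbR1 s hsF]
    simp [hne]
  have hredu : ∑ s ∈ F', a s * (bL s mo - bR s mo) = 0 := by
    rw [Finset.sum_subset hsub hvan]
    exact hmo
  have hIfac : ∀ (z : Fin q → ℂ) (s : Fin q → ℕ), s ∈ F' →
      ∏ i, (Complex.I * z i)^(s i) = Complex.I^mo * ∏ i, (z i)^(s i) := by
    intro z s hs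
    have hsum : ∑ i, s i = mo := (Finset.mem_filter.mp hs).2
    calc ∏ i, (Complex.I * z i)^(s i) = ∏ i, (Complex.I^(s i) * (z i)^(s i)) :=
        Finset.prod_congr rfl fun i _ => mul_pow _ _ _
      _ = (∏ i, Complex.I^(s i)) * ∏ i, (z i)^(s i) := Finset.prod_mul_distrib
      _ = Complex.I^mo * ∏ i, (z i)^(s i) := by rw [Finset.prod_pow_eq_pow_sum, hsum]
  have hw : ∀ i, LC ξ (A (EuclideanSpace.single i 1)) = ((w i : ℝ) : ℂ) := by
    intro i
    have h1 : w i = @inner ℝ _ _ w (EuclideanSpace.single i (1:ℝ)) := by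
      rw [EuclideanSpace.inner_single_right]
      simp
    have h2 : w i = @inner ℝ _ _ ξ (A (EuclideanSpace.single i (1:ℝ))) := by
      rw [h1, hwdef, ContinuousLinearMap.adjoint_inner_left]
    simp [LC, h2]
  have hfinal : Complex.I^mo * (psym mo a w - psym mo a ξ) = 0 := by
    rw [← hredu]
    rw [psym, psym, ← hF', ← Finset.sum_sub_distrib, Finset.mul_sum]
    apply Finset.sum_congr rfl
    intro s hs
    rw [hbL1 s (hsub hs), hbR1 s (hsub hs)]
    have hsum : ∑ i, s i = mo := (Finset.mem_filter.mp hs).2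
    simp only [hsum, if_true]
    rw [show (∏ i, (Complex.I * LC ξ (A (EuclideanSpace.single i 1)))^(s i))
        = ∏ i, (Complex.I * ((w i : ℝ):ℂ))^(s i) from
      Finset.prod_congr rfl fun i _ => by rw [hw i]]
    rw [hIfac _ s hs, hIfac _ s hs]
    ring
  have : psym mo a w - psym mo a ξ = 0 := by
    rcases mul_eq_zero.mp hfinal with h | h
    · exact absurd h (pow_ne_zero _ Complex.I_ne_zero)
    · exact h
  exact sub_eq_zero.mp this
lemma psym_continuous {q m : ℕ} (a : (Fin q → ℕ) → ℂ) : Continuous (fun ξ : E q => psym m a ξ) := by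
  unfold psym
  apply continuous_finset_sum
  intro s _
  apply continuous_const.mul
  apply continuous_finset_prod
  intro i _
  exact ((Complex.continuous_ofReal.comp ((continuous_apply i).comp (PiLp.continuous_ofLp 2 _))).pow _)
lemma psym_zero {q m : ℕ} (hm : 1 ≤ m) (a : (Fin q → ℕ) → ℂ) : psym m a 0 = 0 := by
  unfold psym
  apply Finset.sum_eq_zero
  intro s hs
  simp only [Finset.mem_filter] at hs
  obtain ⟨i, hi⟩ : ∃ i, s i ≠ 0 := by
    by_contra h
    push_neg at h
    have : ∑ i, s i = 0 := Finset.sum_eq_zero (fun i _ => h i)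
    omega
  have : ∏ i, ((0 : E q) i : ℂ) ^ s i = 0 := by
    apply Finset.prod_eq_zero (Finset.mem_univ i)
    simp [zero_pow hi]
  rw [this, mul_zero]
lemma psym_smul {q m : ℕ} (a : (Fin q → ℕ) → ℂ) (c : ℝ) (ξ : E q) :
    psym m a (c • ξ) = (c:ℂ)^m * psym m a ξ := by
  unfold psym
  rw [Finset.mul_sum]
  apply Finset.sum_congr rfl
  intro s hs
  simp only [Finset.mem_filter] at hs
  have : ∏ i, (((c • ξ) i : ℝ) : ℂ) ^ s i = (c:ℂ)^m * ∏ i, ((ξ i : ℝ):ℂ) ^ s i := by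
    have h1 : ∀ i, (((c • ξ) i : ℝ) : ℂ) ^ s i = ((c:ℂ)^ s i) * ((ξ i : ℝ):ℂ) ^ s i := by
      intro i
      have : ((c • ξ) i : ℝ) = c * ξ i := rfl
      rw [this]
      push_cast
      ring
    rw [Finset.prod_congr rfl (fun i _ => h1 i), Finset.prod_mul_distrib,
      Finset.prod_pow_eq_pow_sum, hs.2]
  rw [this]
  ring
lemma psym_norm_bounds {q m : ℕ} (hq : 1 ≤ q) (hm : 1 ≤ m) (a : (Fin q → ℕ) → ℂ)
    (hell : ∀ ξ : E q, ξ ≠ 0 → psym m a ξ ≠ 0) :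
    ∃ c C : ℝ, 0 < c ∧ c ≤ C ∧
      ∀ ξ : E q, ‖ξ‖ = 1 → c ≤ ‖psym m a ξ‖ ∧ ‖psym m a ξ‖ ≤ C := by
  have hS : IsCompact (Metric.sphere (0 : E q) 1) := isCompact_sphere 0 1
  have hx0 : EuclideanSpace.single (⟨0, hq⟩ : Fin q) (1:ℝ) ∈ Metric.sphere (0 : E q) 1 := by
    simp [EuclideanSpace.norm_single]
  have hcont : ContinuousOn (fun ξ : E q => ‖psym m a ξ‖) (Metric.sphere 0 1) :=
    ((psym_continuous a).norm).continuousOn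
  obtain ⟨ξmin, hξmin, hmin⟩ := hS.exists_isMinOn ⟨_, hx0⟩ hcont
  obtain ⟨ξmax, hξmax, hmax⟩ := hS.exists_isMaxOn ⟨_, hx0⟩ hcont
  have hne : ξmin ≠ 0 := by
    intro h; rw [h] at hξmin; simp at hξmin
  refine ⟨‖psym m a ξmin‖, ‖psym m a ξmax‖, ?_, ?_, ?_⟩
  · exact norm_pos_iff.mpr (hell _ hne)
  · exact hmin hξmax
  · intro ξ hξ
    have hξS : ξ ∈ Metric.sphere (0 : E q) 1 := by simpa using hξ
    exact ⟨hmin hξS, hmax hξS⟩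
lemma bounds_of_symbol_preserved {q m : ℕ} (hq : 1 ≤ q) (hm : 1 ≤ m) (a : (Fin q → ℕ) → ℂ)
    (hell : ∀ ξ : E q, ξ ≠ 0 → psym m a ξ ≠ 0) :
    ∃ lam mu : ℝ, 0 < lam ∧ lam ≤ mu ∧
      ∀ A : E q →L[ℝ] E q,
        (∀ ξ : E q, psym m a ((ContinuousLinearMap.adjoint A) ξ) = psym m a ξ) →
        ∀ v : E q, lam * ‖v‖ ≤ ‖A v‖ ∧ ‖A v‖ ≤ mu * ‖v‖ := by
  obtain ⟨c, C, hc, hcC, hb⟩ := psym_norm_bounds hq hm a hell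
  have hC : 0 < C := lt_of_lt_of_le hc hcC
  refine ⟨min 1 (c/C), max 1 (C/c), lt_min one_pos (div_pos hc hC), le_trans (min_le_left _ _) (le_max_left _ _), ?_⟩
  intro A hA v
  set lam := min 1 (c/C) with hlam
  set mu := max 1 (C/c) with hmu
  set B := ContinuousLinearMap.adjoint A with hB
  -- symbol bounds on all of E q
  have hfull : ∀ ξ : E q, c * ‖ξ‖^m ≤ ‖psym m a ξ‖ ∧ ‖psym m a ξ‖ ≤ C * ‖ξ‖^m := by
    intro ξ
    rcases eq_or_ne ξ 0 with rfl | hξ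
    · rw [psym_zero hm a]
      simp [zero_pow (by omega : m ≠ 0)]
    · have hn : (0:ℝ) < ‖ξ‖ := norm_pos_iff.mpr hξ
      have hu : ‖(‖ξ‖⁻¹ • ξ : E q)‖ = 1 := by
        rw [norm_smul]; simp [abs_of_pos hn, inv_mul_cancel₀ hn.ne']
      have key : psym m a ξ = (‖ξ‖:ℂ)^m * psym m a (‖ξ‖⁻¹ • ξ) := by
        have h := @psym_smul q m a ‖ξ‖ (‖ξ‖⁻¹ • ξ)
        rw [smul_smul, mul_inv_cancel₀ hn.ne', one_smul] at h
        exact h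
      have hnorm : ‖psym m a ξ‖ = ‖ξ‖^m * ‖psym m a (‖ξ‖⁻¹ • ξ)‖ := by
        rw [key, norm_mul, norm_pow, Complex.norm_real, Real.norm_eq_abs, abs_of_pos hn]
      obtain ⟨h1, h2⟩ := hb _ hu
      constructor
      · rw [hnorm, mul_comm c]
        exact mul_le_mul_of_nonneg_left h1 (by positivity)
      · rw [hnorm, mul_comm C]
        exact mul_le_mul_of_nonneg_left h2 (by positivity)
  -- bounds on B
  have hBunit : ∀ ξ : E q, lam * ‖ξ‖ ≤ ‖B ξ‖ ∧ ‖B ξ‖ ≤ mu * ‖ξ‖ := by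
    intro ξ
    rcases eq_or_ne ξ 0 with rfl | hξ
    · simp
    · have hn : (0:ℝ) < ‖ξ‖ := norm_pos_iff.mpr hξ
      obtain ⟨hl1, hl2⟩ := hfull (B ξ)
      obtain ⟨hr1, hr2⟩ := hfull ξ
      rw [hA ξ] at hl1 hl2
      have e1 : c * ‖ξ‖^m ≤ C * ‖B ξ‖^m := le_trans hr1 hl2
      have e2 : c * ‖B ξ‖^m ≤ C * ‖ξ‖^m := le_trans hl1 hr2
      have hX : (0:ℝ) < ‖ξ‖^(m-1) := pow_pos hn _
      have hsplitξ : ‖ξ‖^m = ‖ξ‖ * ‖ξ‖^(m-1) := by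
        rw [← pow_succ']
        congr 1
        omega
      have hsplitB : ‖B ξ‖^m = ‖B ξ‖ * ‖B ξ‖^(m-1) := by
        rw [← pow_succ']
        congr 1
        omega
      rcases le_or_gt ‖B ξ‖ ‖ξ‖ with hcase | hcase
      · constructor
        · have hpow : ‖B ξ‖^(m-1) ≤ ‖ξ‖^(m-1) := pow_le_pow_left₀ (norm_nonneg _) hcase _
          have : c * (‖ξ‖ * ‖ξ‖^(m-1)) ≤ C * (‖B ξ‖ * ‖ξ‖^(m-1)) := by
            calc c * (‖ξ‖ * ‖ξ‖^(m-1)) = c * ‖ξ‖^m := by rw [hsplitξ]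
              _ ≤ C * ‖B ξ‖^m := e1
              _ = C * (‖B ξ‖ * ‖B ξ‖^(m-1)) := by rw [hsplitB]
              _ ≤ C * (‖B ξ‖ * ‖ξ‖^(m-1)) := by
                  apply mul_le_mul_of_nonneg_left _ hC.le
                  exact mul_le_mul_of_nonneg_left hpow (norm_nonneg _)
          have h4 : c * ‖ξ‖ ≤ C * ‖B ξ‖ := by
            have h5 : c * ‖ξ‖ * ‖ξ‖^(m-1) ≤ C * ‖B ξ‖ * ‖ξ‖^(m-1) := by
              calc c * ‖ξ‖ * ‖ξ‖^(m-1) = c * (‖ξ‖ * ‖ξ‖^(m-1)) := by ring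
                _ ≤ C * (‖B ξ‖ * ‖ξ‖^(m-1)) := this
                _ = C * ‖B ξ‖ * ‖ξ‖^(m-1) := by ring
            exact le_of_mul_le_mul_right h5 hX
          calc lam * ‖ξ‖ ≤ (c / C) * ‖ξ‖ := mul_le_mul_of_nonneg_right (min_le_right _ _) hn.le
            _ ≤ ‖B ξ‖ := by
                rw [div_mul_eq_mul_div, div_le_iff₀ hC]
                calc c * ‖ξ‖ ≤ C * ‖B ξ‖ := h4
                  _ = ‖B ξ‖ * C := by ring
        · calc ‖B ξ‖ ≤ ‖ξ‖ := hcase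
            _ ≤ mu * ‖ξ‖ := le_mul_of_one_le_left hn.le (le_max_left _ _)
      · constructor
        · calc lam * ‖ξ‖ ≤ 1 * ‖ξ‖ := mul_le_mul_of_nonneg_right (min_le_left _ _) hn.le
            _ = ‖ξ‖ := one_mul _
            _ ≤ ‖B ξ‖ := hcase.le
        · have hpow : ‖ξ‖^(m-1) ≤ ‖B ξ‖^(m-1) := pow_le_pow_left₀ (norm_nonneg _) hcase.le _
          have h3 : c * (‖B ξ‖ * ‖ξ‖^(m-1)) ≤ C * (‖ξ‖ * ‖ξ‖^(m-1)) := by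
            calc c * (‖B ξ‖ * ‖ξ‖^(m-1)) ≤ c * (‖B ξ‖ * ‖B ξ‖^(m-1)) := by
                  apply mul_le_mul_of_nonneg_left _ hc.le
                  exact mul_le_mul_of_nonneg_left hpow (norm_nonneg _)
              _ = c * ‖B ξ‖^m := by rw [hsplitB]
              _ ≤ C * ‖ξ‖^m := e2
              _ = C * (‖ξ‖ * ‖ξ‖^(m-1)) := by rw [hsplitξ]
          have h4 : c * ‖B ξ‖ ≤ C * ‖ξ‖ := by
            have h5 : c * ‖B ξ‖ * ‖ξ‖^(m-1) ≤ C * ‖ξ‖ * ‖ξ‖^(m-1) := by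
              calc c * ‖B ξ‖ * ‖ξ‖^(m-1) = c * (‖B ξ‖ * ‖ξ‖^(m-1)) := by ring
                _ ≤ C * (‖ξ‖ * ‖ξ‖^(m-1)) := h3
                _ = C * ‖ξ‖ * ‖ξ‖^(m-1) := by ring
            exact le_of_mul_le_mul_right h5 hX
          have h6 : ‖B ξ‖ ≤ (C / c) * ‖ξ‖ := by
            rw [div_mul_eq_mul_div, le_div_iff₀ hc]
            calc ‖B ξ‖ * c = c * ‖B ξ‖ := by ring
              _ ≤ C * ‖ξ‖ := h4
          exact h6.trans (mul_le_mul_of_nonneg_right (le_max_right _ _) (norm_nonneg _))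
  -- transfer bounds from B to A
  constructor
  · rcases eq_or_ne v 0 with rfl | hv
    · simp
    · have hn : (0:ℝ) < ‖v‖ := norm_pos_iff.mpr hv
      have hinj : Function.Injective B := by
        intro x y hxy
        have hz : B (x - y) = 0 := by rw [map_sub, hxy, sub_self]
        by_contra hne
        have : x - y ≠ 0 := sub_ne_zero.mpr hne
        have := hell _ this
        rw [← hA (x - y), hz, psym_zero hm a] at this
        exact this rfl
      have hsurj : Function.Surjective B := by
        have h := LinearMap.injective_iff_surjective (f := (B : E q →ₗ[ℝ] E q))
        exact h.mp hinj
      obtain ⟨u, hu⟩ := hsurj v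
      have hub : ‖u‖ ≤ ‖v‖ / lam := by
        have := (hBunit u).1
        rw [hu] at this
        rw [le_div_iff₀ (lt_min one_pos (div_pos hc hC))]
        linarith [this]
      have hiv : ‖v‖^2 = inner ℝ u (A v) := by
        conv_lhs => rw [← real_inner_self_eq_norm_sq]
        conv_lhs => rw [show (inner ℝ v v : ℝ) = inner ℝ (B u) v from by rw [hu]]
        rw [ContinuousLinearMap.adjoint_inner_left]
      have hle : ‖v‖^2 ≤ (‖v‖ / lam) * ‖A v‖ := by
        rw [hiv]
        calc (inner ℝ u (A v) : ℝ) ≤ ‖u‖ * ‖A v‖ := real_inner_le_norm u (A v)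
          _ ≤ (‖v‖ / lam) * ‖A v‖ := mul_le_mul_of_nonneg_right hub (norm_nonneg _)
      have hlampos : (0:ℝ) < lam := lt_min one_pos (div_pos hc hC)
      have : lam * ‖v‖ * ‖v‖ ≤ ‖A v‖ * ‖v‖ := by
        have h6 : lam * ‖v‖^2 ≤ ‖v‖ * ‖A v‖ := by
          calc lam * ‖v‖^2 ≤ lam * ((‖v‖ / lam) * ‖A v‖) := mul_le_mul_of_nonneg_left hle hlampos.le
            _ = ‖v‖ * ‖A v‖ := by field_simp
        calc lam * ‖v‖ * ‖v‖ = lam * ‖v‖^2 := by ring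
          _ ≤ ‖v‖ * ‖A v‖ := h6
          _ = ‖A v‖ * ‖v‖ := by ring
      exact le_of_mul_le_mul_right this hn
  · rcases eq_or_ne (A v) 0 with hAv | hAv
    · rw [hAv]
      simp only [norm_zero]
      positivity
    · have hApos : (0:ℝ) < ‖A v‖ := norm_pos_iff.mpr hAv
      have h1 : ‖A v‖^2 = inner ℝ (B (A v)) v := by
        rw [ContinuousLinearMap.adjoint_inner_left, real_inner_self_eq_norm_sq]
      have h2 : ‖A v‖^2 ≤ mu * ‖A v‖ * ‖v‖ := by
        rw [h1]
        calc (inner ℝ (B (A v)) v : ℝ) ≤ ‖B (A v)‖ * ‖v‖ := real_inner_le_norm _ _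
          _ ≤ (mu * ‖A v‖) * ‖v‖ := mul_le_mul_of_nonneg_right (hBunit (A v)).2 (norm_nonneg _)
      have : ‖A v‖ * ‖A v‖ ≤ mu * ‖v‖ * ‖A v‖ := by
        calc ‖A v‖ * ‖A v‖ = ‖A v‖^2 := by ring
          _ ≤ mu * ‖A v‖ * ‖v‖ := h2
          _ = mu * ‖v‖ * ‖A v‖ := by ring
      exact le_of_mul_le_mul_right this hApos

/-- Uniform bounds `λ ‖v‖ ≤ ‖Dψ_x(v)‖ ≤ μ ‖v‖` for the differentials of all smooth local
maps commuting with a fixed elliptic constant-coefficient operator of order `m ≥ 2`. -/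
theorem commuting_maps_uniform_derivative_bounds
    {q m : ℕ} (hq : 1 ≤ q) (hm : 2 ≤ m)
    (a : (Fin q → ℕ) → ℂ)
    (hell : ∀ ξ : Fin q → ℝ, ξ ≠ 0 →
      ∑ s ∈ (Finset.Iic (fun _ : Fin q => m)).filter (fun s => ∑ i, s i = m),
        a s * ∏ i, (ξ i : ℂ) ^ s i ≠ 0) :
    ∃ lam mu : ℝ, 0 < lam ∧ lam ≤ mu ∧
      ∀ U V : Set (E q), IsOpen U → IsOpen V →
      ∀ ψ : E q → E q, ContDiffOn ℝ (⊤ : ℕ∞) ψ U → Set.MapsTo ψ U V →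
      (∀ f : E q → ℂ, ContDiffOn ℝ (⊤ : ℕ∞) f V →
        ∀ x ∈ U, diffOpConst m a (f ∘ ψ) x = diffOpConst m a f (ψ x)) →
      ∀ x ∈ U, ∀ v : E q,
        lam * ‖v‖ ≤ ‖fderiv ℝ ψ x v‖ ∧ ‖fderiv ℝ ψ x v‖ ≤ mu * ‖v‖ := by
  have hm1 : 1 ≤ m := by omega
  have hell' : ∀ ξ : E q, ξ ≠ 0 → psym m a ξ ≠ 0 := fun ξ hξ => hell ξ (by simpa using hξ)
  obtain ⟨lam, mu, hlam, hlm, hbound⟩ := bounds_of_symbol_preserved hq hm1 a hell'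
  refine ⟨lam, mu, hlam, hlm, ?_⟩
  intro U V hU hV ψ hψ hmaps hcomm x hx v
  have hcomm' : ∀ (ξ : E q) (t : ℝ), ∀ y ∈ U,
      diffOpConst m a (fexp ξ t ∘ ψ) y = diffOpConst m a (fexp ξ t) (ψ y) := by
    intro ξ t y hy
    exact hcomm (fexp ξ t) ((fexp_contDiff ξ t).contDiffOn) y hy
  have hsym : ∀ ξ : E q, psym m a ((ContinuousLinearMap.adjoint (fderiv ℝ ψ x)) ξ) = psym m a ξ :=
    fun ξ => symbol_preserved a hU hψ hcomm' hx ξ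
  exact hbound (fderiv ℝ ψ x) hsym v
end

section
/- Let f : ℝ → ℝ be differentiable with f(y₀) = 0 and f'(y₀) = 1 at some point y₀ ∈ ℝ. For n ∈ ℕ define ψₙ : ℝ² → ℝ² by ψₙ(y, z) = (y, z + n · f(y)). Then each ψₙ is a bijection of ℝ², its Fréchet derivative at the point m = (y₀, z₀) (for any z₀ ∈ ℝ) is the linear map (u, v) ↦ (u, n·u + v), the operator norm satisfies ‖fderiv ℝ ψₙ (y₀, z₀)‖ ≥ n, and hence ‖fderiv ℝ ψₙ (y₀, z₀)‖ tends to infinity as n → ∞. In particular there is no constant μ bounding the operator norms of the derivatives of all the ψₙ at (y₀, z₀). -/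
/-!
Each `ψₙ` is the shear `p ↦ p + n f(p₀) • e₁` of `ℝ²`, which moves points parallel to the line
`p₀ = const` that it preserves; hence the shear with profile `-n f` inverts it. Its derivative at
`(y₀, z₀)` is the linear shear `w ↦ w + n f'(y₀) w₀ • e₁`, which sends `e₀` to `e₀ + n e₁`, a vector
of length at least `n` by Pythagoras. So the operator norms grow at least linearly in `n`.
-/

open Filter

section Shear

variable {𝕜 E : Type*} [NontriviallyNormedField 𝕜] [NormedAddCommGroup E] [NormedSpace 𝕜 E]

def shear (ℓ : E →L[𝕜] 𝕜) (e : E) (g : 𝕜 → 𝕜) (p : E) : E := p + g (ℓ p) • e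

variable {ℓ : E →L[𝕜] 𝕜} {e : E}

theorem shear_shear (hℓe : ℓ e = 0) (g h : 𝕜 → 𝕜) (p : E) :
    shear ℓ e g (shear ℓ e h p) = shear ℓ e (g + h) p := by
  simp only [shear, map_add, map_smul, hℓe, smul_zero, add_zero, Pi.add_apply, add_smul]
  abel

theorem shear_bijective (hℓe : ℓ e = 0) (g : 𝕜 → 𝕜) : Function.Bijective (shear ℓ e g) := by
  have shear_zero : shear ℓ e 0 = id := by ext p; simp [shear]
  refine Function.bijective_iff_has_inverse.2 ⟨shear ℓ e (-g), fun p => ?_, fun p => ?_⟩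
  · rw [shear_shear hℓe, neg_add_cancel, shear_zero, id]
  · rw [shear_shear hℓe, add_neg_cancel, shear_zero, id]

theorem hasFDerivAt_shear {g : 𝕜 → 𝕜} {a : 𝕜} {p : E} (hg : HasDerivAt g a (ℓ p)) :
    HasFDerivAt (shear ℓ e g) (ContinuousLinearMap.id 𝕜 E + (a • ℓ).smulRight e) p :=
  (hasFDerivAt_id p).add ((hg.comp_hasFDerivAt p ℓ.hasFDerivAt).smul_const e)

end Shear

section InnerProductSpace

variable {F : Type*} [NormedAddCommGroup F] [InnerProductSpace ℝ F]

theorem norm_le_norm_add_of_inner_eq_zero {x y : F} (h : inner ℝ x y = 0) : ‖y‖ ≤ ‖x + y‖ := by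
  have := norm_add_sq_eq_norm_sq_add_norm_sq_real h
  nlinarith [sq_nonneg ‖x‖, norm_nonneg y, norm_nonneg (x + y)]

theorem abs_mul_norm_le_opNorm_id_add_smulRight_mul (ℓ : F →L[ℝ] ℝ) (e : F) (a : ℝ) {w : F}
    (hwe : inner ℝ w e = 0) :
    |a * ℓ w| * ‖e‖ ≤ ‖ContinuousLinearMap.id ℝ F + (a • ℓ).smulRight e‖ * ‖w‖ :=
  calc |a * ℓ w| * ‖e‖ = ‖(a * ℓ w) • e‖ := by rw [norm_smul, Real.norm_eq_abs]
    _ ≤ ‖w + (a * ℓ w) • e‖ :=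
      norm_le_norm_add_of_inner_eq_zero (by rw [inner_smul_right, hwe, mul_zero])
    _ = ‖(ContinuousLinearMap.id ℝ F + (a • ℓ).smulRight e) w‖ := by simp
    _ ≤ _ := ContinuousLinearMap.le_opNorm _ _

end InnerProductSpace

theorem counterexample_unbounded_holonomy_derivatives_general
    (f : ℝ → ℝ)
    (y₀ : ℝ) (hf1 : deriv f y₀ = 1) (z₀ : ℝ)
    (ψ : ℕ → EuclideanSpace ℝ (Fin 2) → EuclideanSpace ℝ (Fin 2))
    (hψ : ∀ n : ℕ, ∀ p : EuclideanSpace ℝ (Fin 2),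
      ψ n p = ![p 0, p 1 + (n : ℝ) * f (p 0)]) :
    (∀ n : ℕ, Function.Bijective (ψ n)) ∧
    (∀ n : ℕ, ∀ w : EuclideanSpace ℝ (Fin 2),
      fderiv ℝ (ψ n) (WithLp.toLp 2 ![y₀, z₀]) w = ![w 0, (n : ℝ) * w 0 + w 1]) ∧
    (∀ n : ℕ, (n : ℝ) ≤ ‖fderiv ℝ (ψ n) (WithLp.toLp 2 ![y₀, z₀])‖) ∧
    Tendsto (fun n : ℕ => ‖fderiv ℝ (ψ n) (WithLp.toLp 2 ![y₀, z₀])‖) atTop atTop ∧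
    ¬ ∃ μ : ℝ, ∀ n : ℕ, ‖fderiv ℝ (ψ n) (WithLp.toLp 2 ![y₀, z₀])‖ ≤ μ := by
  set ℓ : EuclideanSpace ℝ (Fin 2) →L[ℝ] ℝ := EuclideanSpace.proj 0
  set e : EuclideanSpace ℝ (Fin 2) := EuclideanSpace.single 1 1
  have hψ_shear : ∀ n : ℕ, ψ n = shear ℓ e (fun y => n * f y) := fun n => by
    ext p i
    fin_cases i <;> simp [hψ, shear, ℓ, e, add_comm]
  -- `deriv f y₀ = 1 ≠ 0` already forces differentiability, as `deriv` is `0` elsewhere.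
  have hf : HasDerivAt f 1 y₀ := by
    have : DifferentiableAt ℝ f y₀ := differentiableAt_of_deriv_ne_zero (by simp [hf1])
    simpa [hf1] using this.hasDerivAt
  have hfderiv : ∀ n : ℕ, fderiv ℝ (ψ n) (WithLp.toLp 2 ![y₀, z₀]) =
      ContinuousLinearMap.id ℝ _ + ((n : ℝ) • ℓ).smulRight e := fun n => by
    have hg : HasDerivAt (fun y => n * f y) (n : ℝ) y₀ := by simpa using hf.const_mul (n : ℝ)
    exact hψ_shear n ▸ (hasFDerivAt_shear hg).fderiv
  have hnorm : ∀ n : ℕ, (n : ℝ) ≤ ‖fderiv ℝ (ψ n) (WithLp.toLp 2 ![y₀, z₀])‖ := fun n => by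
    simpa [hfderiv, ℓ, e] using
      abs_mul_norm_le_opNorm_id_add_smulRight_mul ℓ e n (w := EuclideanSpace.single 0 1)
        (by simp [e, EuclideanSpace.inner_single_left])
  refine ⟨fun n => hψ_shear n ▸ shear_bijective (by simp [ℓ, e]) _, fun n w => ?_, hnorm,
    tendsto_atTop_mono hnorm tendsto_natCast_atTop_atTop, fun ⟨μ, hμ⟩ => ?_⟩
  · ext i
    fin_cases i <;> simp [hfderiv, ℓ, e, add_comm]
  · obtain ⟨k, hk⟩ := exists_nat_gt μ
    exact (hk.trans_le (hnorm k)).not_ge (hμ k)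

/-- The holonomy-type maps `ψₙ(y, z) = (y, z + n f(y))` of the counter-example:
each is a bijection of Euclidean `ℝ²`, its derivative at `(y₀, z₀)` is
`(u, v) ↦ (u, n u + v)`, the operator norms of these derivatives are at least `n`,
tend to infinity, and in particular admit no uniform upper bound. -/
theorem counterexample_unbounded_holonomy_derivatives
    (f : ℝ → ℝ) (hf : Differentiable ℝ f)
    (y₀ : ℝ) (hf0 : f y₀ = 0) (hf1 : deriv f y₀ = 1) (z₀ : ℝ)
    (ψ : ℕ → EuclideanSpace ℝ (Fin 2) → EuclideanSpace ℝ (Fin 2))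
    (hψ : ∀ n : ℕ, ∀ p : EuclideanSpace ℝ (Fin 2),
      ψ n p = ![p 0, p 1 + (n : ℝ) * f (p 0)]) :
    (∀ n : ℕ, Function.Bijective (ψ n)) ∧
    (∀ n : ℕ, ∀ w : EuclideanSpace ℝ (Fin 2),
      fderiv ℝ (ψ n) (WithLp.toLp 2 ![y₀, z₀]) w = ![w 0, (n : ℝ) * w 0 + w 1]) ∧
    (∀ n : ℕ, (n : ℝ) ≤ ‖fderiv ℝ (ψ n) (WithLp.toLp 2 ![y₀, z₀])‖) ∧
    Tendsto (fun n : ℕ => ‖fderiv ℝ (ψ n) (WithLp.toLp 2 ![y₀, z₀])‖) atTop atTop ∧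
    ¬ ∃ μ : ℝ, ∀ n : ℕ, ‖fderiv ℝ (ψ n) (WithLp.toLp 2 ![y₀, z₀])‖ ≤ μ :=
  counterexample_unbounded_holonomy_derivatives_general f y₀ hf1 z₀ ψ hψ
end

section
/- Let q ≥ 1 and m ≥ 1. Let U and V be open subsets of ℝ^q, let P_U be a differential operator of order ≤ m on U with continuous coefficients a_s : U → ℂ, and let P_V be a differential operator of order ≤ m on V with continuous coefficients b_s : V → ℂ. Let ψₙ : U → V (n ∈ ℕ) be smooth maps, each intertwining P_U and P_V, i.e. (P_V f)(ψₙ(x)) = (P_U (f ∘ ψₙ))(x) for all smooth f : V → ℂ and x ∈ U. Let ψ : U → V be a smooth map such that for every k ≤ m and every x ∈ U, iteratedFDeriv ℝ k ψₙ x converges to iteratedFDeriv ℝ k ψ x as n → ∞. Then ψ also intertwines P_U and P_V: (P_V f)(ψ(x)) = (P_U (f ∘ ψ))(x) for all smooth f : V → ℂ and x ∈ U. -/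
open Finset Filter

/-! ### Auxiliary lemmas -/

/-- The list of directions associated to a multi-index. -/
def dirList {q : ℕ} (s : Fin q → ℕ) : List (Fin q) :=
  (List.finRange q).flatMap fun i => List.replicate (s i) i

lemma foldr_replicate_pd {q : ℕ} (i : Fin q) (n : ℕ) (f : E q → ℂ) :
    (List.replicate n i).foldr pd f = (pd i)^[n] f := by
  induction n with
  | zero => rfl
  | succ n ih =>
      rw [List.replicate_succ, List.foldr_cons, ih,
        ← Function.iterate_succ_apply' (pd i) n f]

lemma mpd_eq_foldr {q : ℕ} (s : Fin q → ℕ) (f : E q → ℂ) :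
    mpd s f = (dirList s).foldr pd f := by
  rw [mpd, dirList]
  induction (List.finRange q) with
  | nil => rfl
  | cons i l ih => rw [List.flatMap_cons, List.foldr_append, List.foldr_cons, ih,
      foldr_replicate_pd]

lemma length_dirList {q : ℕ} (s : Fin q → ℕ) : (dirList s).length = ∑ i, s i := by
  rw [dirList, List.length_flatMap, Fin.sum_univ_def]
  simp [Function.comp_def]

/-- On an open set, the iterated directional derivative along a list of coordinate directions
is given by the iterated Fréchet derivative applied to the corresponding basis vectors. -/
lemma foldr_pd_eq {q : ℕ} {O : Set (E q)} (hO : IsOpen O) {g : E q → ℂ}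
    (hg : ContDiffOn ℝ (⊤ : ℕ∞) g O) (L : List (Fin q)) :
    ∀ x ∈ O, L.foldr pd g x =
      iteratedFDeriv ℝ L.length g x (fun j => EuclideanSpace.single (L.get j) 1) := by
  induction L with
  | nil =>
      intro x hx
      simp [iteratedFDeriv_zero_apply]
  | cons i L ih =>
      intro x hx
      have hct : ContDiffAt ℝ (⊤ : ℕ∞) g x := hg.contDiffAt (hO.mem_nhds hx)
      have hdiff : DifferentiableAt ℝ (iteratedFDeriv ℝ L.length g) x :=
        (hct.iteratedFDeriv_right (m := 1) (by exact_mod_cast le_top)).differentiableAt one_ne_zero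
      set v : Fin L.length → E q := fun j => EuclideanSpace.single (L.get j) 1 with hv
      have heq : (L.foldr pd g) =ᶠ[nhds x] fun y => iteratedFDeriv ℝ L.length g y v :=
        Filter.eventually_of_mem (hO.mem_nhds hx) ih
      have hfd : fderiv ℝ (fun y => iteratedFDeriv ℝ L.length g y v) x =
          (ContinuousMultilinearMap.apply ℝ (fun _ : Fin L.length => E q) ℂ v).comp
            (fderiv ℝ (iteratedFDeriv ℝ L.length g) x) :=
        (((ContinuousMultilinearMap.apply ℝ (fun _ : Fin L.length => E q) ℂ v).hasFDerivAt).comp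
          x hdiff.hasFDerivAt).fderiv
      show pd i (L.foldr pd g) x = _
      rw [pd, heq.fderiv_eq, hfd]
      show _ = iteratedFDeriv ℝ (L.length + 1) g x
        (fun j : Fin (L.length + 1) => EuclideanSpace.single ((i :: L).get j) 1)
      rw [iteratedFDeriv_succ_apply_left]
      have htail : Fin.tail (fun j : Fin (L.length + 1) =>
          EuclideanSpace.single ((i :: L).get j) (1:ℝ)) = v := by
        funext j; simp [Fin.tail, hv]
      rw [htail]
      simp

/-- Representation of the iterated partial derivative `mpd` on an open set via the
iterated Fréchet derivative. -/
lemma mpd_eq {q : ℕ} {O : Set (E q)} (hO : IsOpen O) {g : E q → ℂ}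
    (hg : ContDiffOn ℝ (⊤ : ℕ∞) g O) (s : Fin q → ℕ) {x : E q} (hx : x ∈ O) :
    mpd s g x = iteratedFDeriv ℝ (dirList s).length g x
      (fun j => EuclideanSpace.single ((dirList s).get j) 1) := by
  rw [mpd_eq_foldr]
  exact foldr_pd_eq hO hg (dirList s) x hx

/-- Convergence of the iterated derivatives of `f ∘ ψseq n` towards those of `f ∘ ψ`,
via the Faà di Bruno formula. -/
lemma tendsto_iteratedFDeriv_comp {q m : ℕ}
    {U V : Set (E q)} (hU : IsOpen U) (hV : IsOpen V)
    {ψseq : ℕ → E q → E q} {ψ : E q → E q}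
    (hψseq : ∀ n, ContDiffOn ℝ (⊤ : ℕ∞) (ψseq n) U)
    (hmapsseq : ∀ n, Set.MapsTo (ψseq n) U V)
    (hψ : ContDiffOn ℝ (⊤ : ℕ∞) ψ U) (hmaps : Set.MapsTo ψ U V)
    (hconv : ∀ k ≤ m, ∀ x ∈ U,
      Tendsto (fun n => iteratedFDeriv ℝ k (ψseq n) x) atTop
        (nhds (iteratedFDeriv ℝ k ψ x)))
    {f : E q → ℂ} (hf : ContDiffOn ℝ (⊤ : ℕ∞) f V)
    {x : E q} (hx : x ∈ U) {N : ℕ} (hN : N ≤ m) :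
    Tendsto (fun n => iteratedFDeriv ℝ N (f ∘ ψseq n) x) atTop
      (nhds (iteratedFDeriv ℝ N (f ∘ ψ) x)) := by
  set Q : E q → FormalMultilinearSeries ℝ (E q) ℂ := ftaylorSeriesWithin ℝ f V with hQdef
  have hQ : HasFTaylorSeriesUpToOn (⊤ : ℕ∞) f Q V :=
    (hf.of_le (by simp)).ftaylorSeriesWithin hV.uniqueDiffOn
  set P : (E q → E q) → E q → FormalMultilinearSeries ℝ (E q) (E q) :=
    fun φ => ftaylorSeriesWithin ℝ φ U with hPdef
  have hPn : ∀ n, HasFTaylorSeriesUpToOn (⊤ : ℕ∞) (ψseq n) (P (ψseq n)) U :=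
    fun n => ((hψseq n).of_le (by simp)).ftaylorSeriesWithin hU.uniqueDiffOn
  have hP : HasFTaylorSeriesUpToOn (⊤ : ℕ∞) ψ (P ψ) U :=
    (hψ.of_le (by simp)).ftaylorSeriesWithin hU.uniqueDiffOn
  have key : ∀ (φ : E q → E q), HasFTaylorSeriesUpToOn (⊤ : ℕ∞) φ (P φ) U →
      Set.MapsTo φ U V →
      iteratedFDeriv ℝ N (f ∘ φ) x = (Q (φ x)).taylorComp (P φ x) N := by
    intro φ hφ hmφ
    have hcomp := hQ.comp hφ hmφ
    rw [← iteratedFDerivWithin_of_isOpen N hU hx]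
    exact (hcomp.eq_iteratedFDerivWithin_of_uniqueDiffOn (by exact_mod_cast le_top)
      hU.uniqueDiffOn hx).symm
  have hgoal1 : ∀ n, iteratedFDeriv ℝ N (f ∘ ψseq n) x =
      (Q (ψseq n x)).taylorComp (P (ψseq n) x) N :=
    fun n => key _ (hPn n) (hmapsseq n)
  rw [key ψ hP hmaps]
  refine Tendsto.congr (fun n => (hgoal1 n).symm) ?_
  have hψx : Tendsto (fun n => ψseq n x) atTop (nhds (ψ x)) := by
    have h0 := hconv 0 (Nat.zero_le m) x hx
    have := ((ContinuousMultilinearMap.apply ℝ (fun _ : Fin 0 => E q) (E q)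
        (fun _ => 0)).continuous.tendsto _).comp h0
    simpa [Function.comp_def, iteratedFDeriv_zero_apply] using this
  have hPconv : ∀ k ≤ m, Tendsto (fun n => P (ψseq n) x k) atTop (nhds (P ψ x k)) := by
    intro k hk
    have he : ∀ (φ : E q → E q), P φ x k = iteratedFDeriv ℝ k φ x := fun φ =>
      iteratedFDerivWithin_of_isOpen k hU hx
    simp only [he]
    exact hconv k hk x hx
  have hQconv : ∀ k : ℕ, Tendsto (fun n => Q (ψseq n x) k) atTop (nhds (Q (ψ x) k)) := by
    intro k
    have hcont : ContinuousOn (fun y => Q y k) V := hQ.cont k (by exact_mod_cast le_top)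
    exact ((hcont.continuousAt (hV.mem_nhds (hmaps hx))).tendsto).comp hψx
  unfold FormalMultilinearSeries.taylorComp
  apply tendsto_finset_sum
  intro c _
  have hrepr : ∀ (qq : FormalMultilinearSeries ℝ (E q) ℂ)
      (pp : FormalMultilinearSeries ℝ (E q) (E q)),
      qq.compAlongOrderedFinpartition pp c =
        (c.compAlongOrderedFinpartitionL ℝ (E q) (E q) ℂ) (qq c.length)
          (fun i => pp (c.partSize i)) := fun _ _ => rfl
  simp only [hrepr]
  have hpair : Tendsto (fun n => ((Q (ψseq n x) c.length),
      (fun i => P (ψseq n) x (c.partSize i)))) atTop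
      (nhds ((Q (ψ x) c.length), (fun i => P ψ x (c.partSize i)))) := by
    refine Tendsto.prodMk_nhds (hQconv c.length) ?_
    rw [tendsto_pi_nhds]
    intro i
    exact hPconv (c.partSize i) (le_trans (c.partSize_le i) hN)
  exact ((c.compAlongOrderedFinpartitionL ℝ (E q) (E q)
    ℂ).continuous_uncurry_of_multilinear.tendsto _).comp hpair

/-- A limit (in the sense of convergence of all derivatives up to order `m`) of smooth maps
intertwining `P_U` and `P_V` still intertwines `P_U` and `P_V`. -/
theorem limit_of_intertwining_maps_intertwines
    {q m : ℕ} (hq : 1 ≤ q) (hm : 1 ≤ m)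
    (U V : Set (E q)) (hU : IsOpen U) (hV : IsOpen V)
    (a b : (Fin q → ℕ) → E q → ℂ)
    (ha : ∀ s : Fin q → ℕ, ∑ i, s i ≤ m → ContinuousOn (a s) U)
    (hb : ∀ s : Fin q → ℕ, ∑ i, s i ≤ m → ContinuousOn (b s) V)
    (ψseq : ℕ → E q → E q) (ψ : E q → E q)
    (hψseq : ∀ n, ContDiffOn ℝ (⊤ : ℕ∞) (ψseq n) U)
    (hmapsseq : ∀ n, Set.MapsTo (ψseq n) U V)
    (hcommseq : ∀ n, ∀ f : E q → ℂ, ContDiffOn ℝ (⊤ : ℕ∞) f V →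
      ∀ x ∈ U, diffOp m b f (ψseq n x) = diffOp m a (f ∘ ψseq n) x)
    (hψ : ContDiffOn ℝ (⊤ : ℕ∞) ψ U) (hmaps : Set.MapsTo ψ U V)
    (hconv : ∀ k ≤ m, ∀ x ∈ U,
      Tendsto (fun n => iteratedFDeriv ℝ k (ψseq n) x) atTop
        (nhds (iteratedFDeriv ℝ k ψ x))) :
    ∀ f : E q → ℂ, ContDiffOn ℝ (⊤ : ℕ∞) f V →
      ∀ x ∈ U, diffOp m b f (ψ x) = diffOp m a (f ∘ ψ) x := by
  intro f hf x hx
  have hψx : Tendsto (fun n => ψseq n x) atTop (nhds (ψ x)) := by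
    have h0 := hconv 0 (Nat.zero_le m) x hx
    have := ((ContinuousMultilinearMap.apply ℝ (fun _ : Fin 0 => E q) (E q)
        (fun _ => 0)).continuous.tendsto _).comp h0
    simpa [Function.comp_def, iteratedFDeriv_zero_apply] using this
  -- convergence of the left-hand sides
  have hA : Tendsto (fun n => diffOp m b f (ψseq n x)) atTop
      (nhds (diffOp m b f (ψ x))) := by
    unfold diffOp
    apply tendsto_finset_sum
    intro s hs
    have hsum : ∑ i, s i ≤ m := (Finset.mem_filter.mp hs).2
    apply Tendsto.mul
    · exact (((hb s hsum).continuousAt (hV.mem_nhds (hmaps hx))).tendsto).comp hψx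
    · have hca : ContinuousAt (fun y => iteratedFDeriv ℝ (dirList s).length f y
          (fun j => EuclideanSpace.single ((dirList s).get j) 1)) (ψ x) := by
        have hd : DifferentiableAt ℝ (iteratedFDeriv ℝ (dirList s).length f) (ψ x) :=
          ((hf.contDiffAt (hV.mem_nhds (hmaps hx))).iteratedFDeriv_right
            (m := 1) (by exact_mod_cast le_top)).differentiableAt one_ne_zero
        exact ((ContinuousMultilinearMap.apply ℝ
          (fun _ : Fin (dirList s).length => E q) ℂ _).continuous.continuousAt).comp
          hd.continuousAt
      have hmeq : (fun y => iteratedFDeriv ℝ (dirList s).length f y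
          (fun j => EuclideanSpace.single ((dirList s).get j) 1)) =ᶠ[nhds (ψ x)]
          mpd s f := by
        filter_upwards [hV.mem_nhds (hmaps hx)] with y hy
        exact (mpd_eq hV hf s hy).symm
      have : ContinuousAt (mpd s f) (ψ x) := hca.congr hmeq
      exact this.tendsto.comp hψx
  -- convergence of the right-hand sides
  have hB : Tendsto (fun n => diffOp m a (f ∘ ψseq n) x) atTop
      (nhds (diffOp m a (f ∘ ψ) x)) := by
    unfold diffOp
    apply tendsto_finset_sum
    intro s hs
    have hsum : ∑ i, s i ≤ m := (Finset.mem_filter.mp hs).2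
    have hNle : (dirList s).length ≤ m := by rw [length_dirList]; exact hsum
    apply Tendsto.mul tendsto_const_nhds
    have hrw : ∀ n, mpd s (f ∘ ψseq n) x = iteratedFDeriv ℝ (dirList s).length
        (f ∘ ψseq n) x (fun j => EuclideanSpace.single ((dirList s).get j) 1) :=
      fun n => mpd_eq hU (hf.comp (hψseq n) (hmapsseq n)) s hx
    rw [mpd_eq hU (hf.comp hψ hmaps) s hx]
    refine Tendsto.congr (fun n => (hrw n).symm) ?_
    exact ((ContinuousMultilinearMap.apply ℝ
      (fun _ : Fin (dirList s).length => E q) ℂ _).continuous.tendsto _).comp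
      (tendsto_iteratedFDeriv_comp hU hV hψseq hmapsseq hψ hmaps hconv hf hx hNle)
  exact tendsto_nhds_unique (hA.congr (fun n => hcommseq n f hf x hx)) hB
end

section
/- Let q ≥ 1 and m ≥ 1, and let p : ℝ^q → ℂ be continuous, positively homogeneous of degree m (p(t • ξ) = tᵐ · p(ξ) for all t ≥ 0 and ξ), and elliptic (p(ξ) ≠ 0 for every ξ ≠ 0). Then the set S = {A : ℝ^q →L[ℝ] ℝ^q | p(A ξ) = p(ξ) for all ξ ∈ ℝ^q} is a compact subset of the space of continuous linear endomorphisms of ℝ^q in the operator-norm topology; moreover S contains the identity, is closed under composition, every element of S is a linear automorphism of ℝ^q, and if A ∈ S then A⁻¹ ∈ S. In other words, the stabilizer of p in GL(q, ℝ) is a compact subgroup. -/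
theorem symbol_stabilizer_aux
    {E : Type*} [NormedAddCommGroup E] [NormedSpace ℝ E]
    [FiniteDimensional ℝ E] [Nontrivial E]
    {m : ℕ} (hm : 1 ≤ m) (p : E → ℂ)
    (hp_cont : Continuous p)
    (hp_hom : ∀ t : ℝ, 0 ≤ t → ∀ ξ : E, p (t • ξ) = (t : ℂ) ^ m * p ξ)
    (hp_ell : ∀ ξ : E, ξ ≠ 0 → p ξ ≠ 0) :
    IsCompact {A : E →L[ℝ] E | ∀ ξ, p (A ξ) = p ξ} ∧
    (ContinuousLinearMap.id ℝ E ∈ {A : E →L[ℝ] E | ∀ ξ, p (A ξ) = p ξ}) ∧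
    (∀ A ∈ {A : E →L[ℝ] E | ∀ ξ, p (A ξ) = p ξ},
      ∀ B ∈ {A : E →L[ℝ] E | ∀ ξ, p (A ξ) = p ξ},
      A.comp B ∈ {A : E →L[ℝ] E | ∀ ξ, p (A ξ) = p ξ}) ∧
    (∀ A ∈ {A : E →L[ℝ] E | ∀ ξ, p (A ξ) = p ξ}, Function.Bijective A) ∧
    (∀ A ∈ {A : E →L[ℝ] E | ∀ ξ, p (A ξ) = p ξ},
      ∃ e : E ≃L[ℝ] E, (e : E →L[ℝ] E) = A ∧
        (e.symm : E →L[ℝ] E) ∈ {A : E →L[ℝ] E | ∀ ξ, p (A ξ) = p ξ}) := by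
  set S : Set (E →L[ℝ] E) := {A | ∀ ξ, p (A ξ) = p ξ} with hS
  have hp0 : p 0 = 0 := by
    have := hp_hom 0 le_rfl 0
    simpa [zero_pow (by omega : m ≠ 0)] using this
  have hinj : ∀ A ∈ S, Function.Injective A := by
    intro A hA
    rw [← ContinuousLinearMap.coe_coe, injective_iff_map_eq_zero']
    intro ξ
    constructor
    · intro h
      by_contra hξ
      exact hp_ell ξ hξ (by rw [← hA ξ]; simp only [ContinuousLinearMap.coe_coe] at h; rw [h, hp0])
    · intro h; simp [h, map_zero]
  have hbij : ∀ A ∈ S, Function.Bijective A := by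
    intro A hA
    have h1 : Function.Injective (A : E →ₗ[ℝ] E) := hinj A hA
    exact ⟨h1, LinearMap.surjective_of_injective h1⟩
  have hsphere : (Metric.sphere (0:E) 1).Nonempty :=
    NormedSpace.sphere_nonempty.mpr zero_le_one
  have hcs : IsCompact (Metric.sphere (0:E) 1) := isCompact_sphere 0 1
  obtain ⟨u₀, hu₀, hmin⟩ := hcs.exists_isMinOn hsphere
    ((continuous_norm.comp hp_cont).continuousOn)
  obtain ⟨v₀, hv₀, hmax⟩ := hcs.exists_isMaxOn hsphere
    ((continuous_norm.comp hp_cont).continuousOn)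
  set c : ℝ := ‖p u₀‖ with hc
  set C : ℝ := ‖p v₀‖ with hC
  have hcpos : 0 < c := by
    refine norm_pos_iff.mpr (hp_ell u₀ ?_)
    intro h
    rw [mem_sphere_iff_norm, h] at hu₀; simp at hu₀
  set K : ℝ := max 1 (C / c) with hK
  have hKpos : 0 < K := lt_max_of_lt_left one_pos
  have hbound : ∀ A ∈ S, ∀ ξ : E, ‖ξ‖ = 1 → ‖A ξ‖ ≤ K := by
    intro A hA ξ hξ
    have hξ0 : ξ ≠ 0 := by intro h; rw [h] at hξ; simp at hξ
    have hAξ0 : A ξ ≠ 0 := fun h => hp_ell ξ hξ0 (by rw [← hA ξ, h, hp0])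
    set r : ℝ := ‖A ξ‖ with hr
    have hrpos : 0 < r := norm_pos_iff.mpr hAξ0
    set u : E := r⁻¹ • A ξ with hu
    have hun : ‖u‖ = 1 := by
      rw [hu, norm_smul, norm_inv, norm_norm, inv_mul_cancel₀ hrpos.ne']
    have hru : r • u = A ξ := by
      rw [hu, smul_smul, mul_inv_cancel₀ hrpos.ne', one_smul]
    have key : r ^ m * ‖p u‖ = ‖p ξ‖ := by
      conv_rhs => rw [← hA ξ, ← hru]
      rw [hp_hom r hrpos.le u, norm_mul, norm_pow, Complex.norm_real,
        Real.norm_eq_abs, abs_of_nonneg hrpos.le]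
    have h1 : c ≤ ‖p u‖ := by
      have := hmin (mem_sphere_iff_norm.mpr (by simpa using hun))
      simpa using this
    have h2 : ‖p ξ‖ ≤ C := by
      have := hmax (mem_sphere_iff_norm.mpr (by simpa using hξ))
      simpa using this
    have hrm : r ^ m ≤ C / c := by
      rw [le_div_iff₀ hcpos]
      calc r ^ m * c ≤ r ^ m * ‖p u‖ :=
            mul_le_mul_of_nonneg_left h1 (pow_nonneg hrpos.le m)
        _ = ‖p ξ‖ := key
        _ ≤ C := h2
    rcases le_or_gt r 1 with h | h
    · exact h.trans (le_max_left _ _)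
    · have hrr : r ≤ r ^ m := le_self_pow₀ h.le (by omega)
      exact (hrr.trans hrm).trans (le_max_right _ _)
  have hopbound : ∀ A ∈ S, ‖A‖ ≤ K := by
    intro A hA
    refine A.opNorm_le_bound hKpos.le (fun x => ?_)
    rcases eq_or_ne x 0 with rfl | hx
    · simp
    · have hxn : 0 < ‖x‖ := norm_pos_iff.mpr hx
      have hun : ‖(‖x‖⁻¹ • x : E)‖ = 1 := by
        rw [norm_smul, norm_inv, norm_norm, inv_mul_cancel₀ hxn.ne']
      have := hbound A hA _ hun
      rw [map_smul, norm_smul, norm_inv, norm_norm] at this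
      calc ‖A x‖ = ‖x‖ * (‖x‖⁻¹ * ‖A x‖) := by
            field_simp
        _ ≤ ‖x‖ * K := by
            exact mul_le_mul_of_nonneg_left this hxn.le
        _ = K * ‖x‖ := mul_comm _ _
  have hclosed : IsClosed S := by
    have : S = ⋂ ξ : E, {A : E →L[ℝ] E | p (A ξ) = p ξ} := by
      ext A; simp [hS, Set.mem_iInter]
    rw [this]
    refine isClosed_iInter (fun ξ => ?_)
    exact isClosed_eq (hp_cont.comp (ContinuousLinearMap.apply ℝ E ξ).continuous)
      continuous_const
  have hcompact : IsCompact S := by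
    refine Metric.isCompact_of_isClosed_isBounded hclosed ?_
    exact isBounded_iff_forall_norm_le.mpr ⟨K, hopbound⟩
  refine ⟨hcompact, fun ξ => rfl, ?_, hbij, ?_⟩
  · intro A hA B hB ξ
    simp only [ContinuousLinearMap.comp_apply]
    rw [hA, hB]
  · intro A hA
    have hb := hbij A hA
    let e₀ : E ≃ₗ[ℝ] E := LinearEquiv.ofBijective (A : E →ₗ[ℝ] E) hb
    let e : E ≃L[ℝ] E := e₀.toContinuousLinearEquiv
    have hcoe : ∀ x, e x = A x := fun x => rfl
    refine ⟨e, by ext x; exact hcoe x, fun ξ => ?_⟩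
    have : A (e.symm ξ) = ξ := by
      have := e.apply_symm_apply ξ
      rwa [hcoe] at this
    conv_rhs => rw [← this, hA]
    rfl

/-- The stabilizer of a continuous, positively homogeneous (degree `m`), elliptic symbol
`p` on Euclidean `ℝ^q` is a compact subgroup of `GL(q, ℝ)`: the set `S` of continuous
linear endomorphisms preserving `p` is compact in the operator-norm topology, contains the
identity, is closed under composition, consists of linear automorphisms, and is closed
under taking inverses. -/
theorem symbol_stabilizer_compact_subgroup
    {q m : ℕ} (hq : 1 ≤ q) (hm : 1 ≤ m)
    (p : EuclideanSpace ℝ (Fin q) → ℂ)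
    (hp_cont : Continuous p)
    (hp_hom : ∀ t : ℝ, 0 ≤ t → ∀ ξ : EuclideanSpace ℝ (Fin q),
      p (t • ξ) = (t : ℂ) ^ m * p ξ)
    (hp_ell : ∀ ξ : EuclideanSpace ℝ (Fin q), ξ ≠ 0 → p ξ ≠ 0) :
    IsCompact {A : EuclideanSpace ℝ (Fin q) →L[ℝ] EuclideanSpace ℝ (Fin q) |
        ∀ ξ, p (A ξ) = p ξ} ∧
    (ContinuousLinearMap.id ℝ (EuclideanSpace ℝ (Fin q)) ∈
      {A : EuclideanSpace ℝ (Fin q) →L[ℝ] EuclideanSpace ℝ (Fin q) |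
        ∀ ξ, p (A ξ) = p ξ}) ∧
    (∀ A ∈ {A : EuclideanSpace ℝ (Fin q) →L[ℝ] EuclideanSpace ℝ (Fin q) |
        ∀ ξ, p (A ξ) = p ξ},
      ∀ B ∈ {A : EuclideanSpace ℝ (Fin q) →L[ℝ] EuclideanSpace ℝ (Fin q) |
        ∀ ξ, p (A ξ) = p ξ},
      A.comp B ∈ {A : EuclideanSpace ℝ (Fin q) →L[ℝ] EuclideanSpace ℝ (Fin q) |
        ∀ ξ, p (A ξ) = p ξ}) ∧
    (∀ A ∈ {A : EuclideanSpace ℝ (Fin q) →L[ℝ] EuclideanSpace ℝ (Fin q) |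
        ∀ ξ, p (A ξ) = p ξ},
      Function.Bijective A) ∧
    (∀ A ∈ {A : EuclideanSpace ℝ (Fin q) →L[ℝ] EuclideanSpace ℝ (Fin q) |
        ∀ ξ, p (A ξ) = p ξ},
      ∃ e : EuclideanSpace ℝ (Fin q) ≃L[ℝ] EuclideanSpace ℝ (Fin q),
        (e : EuclideanSpace ℝ (Fin q) →L[ℝ] EuclideanSpace ℝ (Fin q)) = A ∧
        (e.symm : EuclideanSpace ℝ (Fin q) →L[ℝ] EuclideanSpace ℝ (Fin q)) ∈
          {A : EuclideanSpace ℝ (Fin q) →L[ℝ] EuclideanSpace ℝ (Fin q) |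
            ∀ ξ, p (A ξ) = p ξ}) := by
  haveI : Nontrivial (EuclideanSpace ℝ (Fin q)) := by
    refine ⟨⟨0, EuclideanSpace.single (⟨0, hq⟩ : Fin q) (1:ℝ), fun h => ?_⟩⟩
    have : ‖EuclideanSpace.single (⟨0, hq⟩ : Fin q) (1:ℝ)‖ = 1 := by
      simp [EuclideanSpace.norm_single]
    rw [← h] at this; simp at this
  exact symbol_stabilizer_aux hm p hp_cont hp_hom hp_ell
end
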